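/- arXiv:2109.14454 — 7 statements merged into one kernel-verified Lean document; each statement's English description precedes it below -/
import Mathlib

section
/- There is a bounded linear operator T_N : L_1[0,1] → L_1[0,1] such that T_N(N·𝟙_{[(j−1)/N, j/N)}) = x_j for all 1 ≤ j ≤ N and ‖I − T_N‖ ≤ ε, where I is the identity operator on L_1[0,1] and the operator norm is with respect to the L_1 norm. -/
open MeasureTheory Set Finset

/-- The interval `I_k(i)` of width `1/(m*N)`, the `i`-th subinterval (1-based)
of `[(k-1)/N, k/N)`. -/
noncomputable def Ik (m N k i : ℕ) : Set ℝ :=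
  Set.Ico (((k : ℝ) - 1) / N + ((i : ℝ) - 1) / (m * N))
    (((k : ℝ) - 1) / N + (i : ℝ) / (m * N))

/-- The functions `x_j` of the construction: for `1 ≤ j ≤ n`,
`x_j = N·𝟙_{[(j-1)/N, j/N)}`, and for `n < j ≤ N`,
`x_j = N·∑_{k=1}^n 𝟙_{I_k(i_{k,j})} + N·𝟙_{[(j-1)/N, j/N)}`, where the indices
`i_{k,j}` are encoded (0-based) by the map `idx`. -/
noncomputable def xfun (n m N : ℕ) (idx : ℕ → Fin n → Fin m) (j : ℕ) : ℝ → ℝ :=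
  fun t =>
    if j ≤ n then
      (N : ℝ) * Set.indicator (Set.Ico (((j : ℝ) - 1) / N) ((j : ℝ) / N)) (fun _ => (1 : ℝ)) t
    else
      (N : ℝ) * ∑ k : Fin n,
          Set.indicator (Ik m N ((k : ℕ) + 1) ((idx j k : ℕ) + 1)) (fun _ => (1 : ℝ)) t
        + (N : ℝ) * Set.indicator (Set.Ico (((j : ℝ) - 1) / N) ((j : ℝ) / N)) (fun _ => (1 : ℝ)) t

/-!
Take `T = I + S` with `S f = ∑_{n < j ≤ N} (∫_{J_j} f) • u_j`, where `J_j = [(j-1)/N, j/N)` and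
`u_j = N·∑_k 𝟙_{I_k(i_{k,j})}`. Since `N·𝟙_{J_j}` has integral `1` over `J_j` and `0` over the
other (disjoint) `J_{j'}`, `T` sends it to `x_j`. Each `u_j` has norm `n·N·(1/(mN)) = n/m = ε`,
so by disjointness `‖S f‖ ≤ ε ∑_j ∫_{J_j} |f| ≤ ε ‖f‖`.
-/

open Function
open scoped ENNReal

section SetIntegralOperator

variable {α F ι : Type*} [MeasurableSpace α] {μ : Measure α}
  [NormedAddCommGroup F] [NormedSpace ℝ F] {t : Finset ι} {s : ι → Set α} {u : ι → F}

variable (μ) in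
noncomputable def setIntegralL1 (s : Set α) : (α →₁[μ] ℝ) →L[ℝ] ℝ :=
  L1.integralCLM.comp (LpToLpRestrictCLM α ℝ ℝ μ 1 s)

theorem setIntegralL1_apply (s : Set α) (f : α →₁[μ] ℝ) :
    setIntegralL1 μ s f = ∫ x in s, f x ∂μ := by
  rw [setIntegralL1, ContinuousLinearMap.comp_apply, ← L1.integral_eq, L1.integral_eq_integral]
  exact integral_congr_ae (LpToLpRestrictCLM_coeFn ℝ s f)

theorem sum_setIntegral_norm_le_norm {E : Type*} [NormedAddCommGroup E] (t : Finset ι)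
    (hs : ∀ i, MeasurableSet (s i)) (hd : Pairwise (Disjoint on s)) (f : α →₁[μ] E) :
    ∑ i ∈ t, ∫ x in s i, ‖f x‖ ∂μ ≤ ‖f‖ := by
  have hf := (L1.integrable_coeFn f).norm
  rw [← integral_biUnion_finset t (fun i _ => hs i) (hd.set_pairwise _)
    (fun i _ => hf.integrableOn), L1.norm_eq_integral_norm]
  exact setIntegral_le_integral hf (ae_of_all _ fun _ => norm_nonneg _)

theorem setIntegral_indicator_const_of_pairwise_disjoint [DecidableEq ι]
    (hs : ∀ i, MeasurableSet (s i)) (hd : Pairwise (Disjoint on s)) (i j : ι) (c : ℝ) :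
    ∫ x in s i, (s j).indicator (fun _ => c) x ∂μ = if i = j then μ.real (s j) * c else 0 := by
  rw [setIntegral_indicator (hs j), setIntegral_const, smul_eq_mul]
  split_ifs with h
  · rw [h, Set.inter_self]
  · rw [(hd h).inter_eq, measureReal_empty, zero_mul]

variable (μ) in
noncomputable def sumSetIntegralSMul (t : Finset ι) (s : ι → Set α) (u : ι → F) :
    (α →₁[μ] ℝ) →L[ℝ] F :=
  ∑ i ∈ t, (setIntegralL1 μ (s i)).smulRight (u i)

theorem sumSetIntegralSMul_apply (f : α →₁[μ] ℝ) :
    sumSetIntegralSMul μ t s u f = ∑ i ∈ t, (∫ x in s i, f x ∂μ) • u i := by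
  simp only [sumSetIntegralSMul, _root_.sum_apply,
    ContinuousLinearMap.smulRight_apply, setIntegralL1_apply]

theorem norm_sumSetIntegralSMul_le (hs : ∀ i, MeasurableSet (s i))
    (hd : Pairwise (Disjoint on s)) {C : ℝ} (hC : 0 ≤ C) (hu : ∀ i ∈ t, ‖u i‖ ≤ C) :
    ‖sumSetIntegralSMul μ t s u‖ ≤ C := by
  refine ContinuousLinearMap.opNorm_le_bound _ hC fun f => ?_
  rw [sumSetIntegralSMul_apply]
  calc ‖∑ i ∈ t, (∫ x in s i, f x ∂μ) • u i‖
      ≤ ∑ i ∈ t, (∫ x in s i, ‖f x‖ ∂μ) * C := by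
        refine (norm_sum_le _ _).trans (Finset.sum_le_sum fun i hi => ?_)
        rw [norm_smul]
        exact mul_le_mul (norm_integral_le_integral_norm _) (hu i hi) (norm_nonneg _)
          (integral_nonneg fun _ => norm_nonneg _)
    _ = C * ∑ i ∈ t, ∫ x in s i, ‖f x‖ ∂μ := by rw [← Finset.sum_mul, mul_comm]
    _ ≤ C * ‖f‖ := by gcongr; exact sum_setIntegral_norm_le_norm t hs hd f

theorem sumSetIntegralSMul_apply_of_ae_eq_indicator [DecidableEq ι]
    (hs : ∀ i, MeasurableSet (s i)) (hd : Pairwise (Disjoint on s)) {f : α →₁[μ] ℝ} {j : ι} {c : ℝ}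
    (hf : f =ᵐ[μ] (s j).indicator fun _ => c) (hc : μ.real (s j) * c = 1) :
    sumSetIntegralSMul μ t s u f = if j ∈ t then u j else 0 := by
  have hint : ∀ i, ∫ x in s i, f x ∂μ = if i = j then 1 else 0 := fun i => by
    rw [integral_congr_ae (ae_restrict_of_ae hf),
      setIntegral_indicator_const_of_pairwise_disjoint hs hd, hc]
  simp only [sumSetIntegralSMul_apply, hint, ite_smul, one_smul, zero_smul, Finset.sum_ite_eq']

theorem coeFn_sum_indicatorConstLp {p : ℝ≥0∞} (t : Finset ι) (hs : ∀ i, MeasurableSet (s i))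
    (hμs : ∀ i, μ (s i) ≠ ∞) (c : ℝ) :
    ⇑(∑ i ∈ t, indicatorConstLp p (hs i) (hμs i) c : Lp ℝ p μ) =ᵐ[μ]
      fun x => c * ∑ i ∈ t, (s i).indicator (fun _ => 1) x := by
  have hind : ∀ᵐ x ∂μ, ∀ i ∈ t,
      indicatorConstLp p (hs i) (hμs i) c x = (s i).indicator (fun _ => c) x :=
    (Filter.eventually_all_finset t).2 fun i _ => indicatorConstLp_coeFn
  filter_upwards [Lp.coeFn_fun_finsetSum t fun i => indicatorConstLp p (hs i) (hμs i) c, hind]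
    with x hsum hi
  rw [hsum, Finset.mul_sum]
  refine Finset.sum_congr rfl fun i hit => ?_
  rw [hi i hit, ← Set.indicator_const_mul, mul_one]

end SetIntegralOperator

local notation "μ₀" => (volume.restrict (Set.Ico (0 : ℝ) 1))

noncomputable def gridIco (N j : ℕ) : Set ℝ := Set.Ico (((j : ℝ) - 1) / N) ((j : ℝ) / N)

theorem pairwise_disjoint_gridIco (N : ℕ) : Pairwise (Disjoint on gridIco N) := by
  have hmono : Monotone fun j : ℕ => ((j : ℝ) - 1) / N := fun a b hab => by
    dsimp only
    gcongr
  convert hmono.pairwise_disjoint_on_Ico_succ using 3 with j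
  simp [gridIco]

theorem measurableSet_gridIco (N j : ℕ) : MeasurableSet (gridIco N j) := measurableSet_Ico

theorem measureReal_gridIco_mul {N j : ℕ} (hj1 : 1 ≤ j) (hjN : j ≤ N) :
    Measure.real μ₀ (gridIco N j) * N = 1 := by
  have hN : (N : ℝ) ≠ 0 := Nat.cast_ne_zero.2 (by omega)
  have hsub : gridIco N j ⊆ Set.Ico 0 1 :=
    Set.Ico_subset_Ico (div_nonneg (sub_nonneg.2 (by exact_mod_cast hj1)) (Nat.cast_nonneg N))
      (div_le_one_of_le₀ (by exact_mod_cast hjN) (Nat.cast_nonneg N))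
  rw [measureReal_restrict_apply (measurableSet_gridIco N j), Set.inter_eq_left.2 hsub, gridIco,
    Real.volume_real_Ico, ← sub_div, sub_sub_cancel, max_eq_left (by positivity)]
  field_simp

theorem measurableSet_Ik (m N k i : ℕ) : MeasurableSet (Ik m N k i) := measurableSet_Ico

theorem volume_real_Ik (m N k i : ℕ) : volume.real (Ik m N k i) = 1 / (m * N) := by
  rw [Ik, Real.volume_real_Ico, add_sub_add_left_eq_sub, ← sub_div, sub_sub_cancel,
    max_eq_left (by positivity)]

/-- The paper's `x_j - N·𝟙_{[(j-1)/N, j/N)}` for `n < j ≤ N`. -/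
noncomputable def gridBump (n m N : ℕ) (idx : ℕ → Fin n → Fin m) (j : ℕ) : Lp ℝ 1 μ₀ :=
  ∑ k : Fin n, indicatorConstLp 1 (measurableSet_Ik m N (k + 1) (idx j k + 1))
    (measure_ne_top _ _) (N : ℝ)

theorem norm_gridBump_le (n m N : ℕ) (idx : ℕ → Fin n → Fin m) (j : ℕ) :
    ‖gridBump n m N idx j‖ ≤ n / m := by
  have hterm : (N : ℝ) * (1 / (m * N)) ≤ 1 / m := by
    rcases eq_or_ne (N : ℝ) 0 with hN | hN
    · rw [hN, zero_mul]; positivity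
    · rw [mul_one_div, mul_comm (m : ℝ), div_mul_cancel_left₀ hN, one_div]
  calc ‖gridBump n m N idx j‖ ≤ ∑ _k : Fin n, 1 / (m : ℝ) := by
        refine (norm_sum_le _ _).trans (Finset.sum_le_sum fun k _ => ?_)
        refine norm_indicatorConstLp_le.trans (le_trans ?_ hterm)
        rw [ENNReal.toReal_one, div_one, Real.rpow_one, Real.norm_natCast,
          ← volume_real_Ik m N (k + 1) (idx j k + 1)]
        gcongr
        refine ENNReal.toReal_mono ?_ (Measure.le_iff'.1 Measure.restrict_le_self _)
        simp [Ik]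
    _ = n / m := by
        rw [Finset.sum_const, Finset.card_univ, Fintype.card_fin, nsmul_eq_mul, mul_one_div]

theorem coeFn_gridBump (n m N : ℕ) (idx : ℕ → Fin n → Fin m) (j : ℕ) :
    gridBump n m N idx j =ᵐ[μ₀] fun t => (N : ℝ) * ∑ k : Fin n,
      (Ik m N (k + 1) (idx j k + 1)).indicator (fun _ => 1) t :=
  coeFn_sum_indicatorConstLp _ _ _ _

theorem stmt0_general (n m N : ℕ) (ε : ℝ) (hε : 0 < ε)
    (hm : (m : ℝ) = n / ε)
    (idx : ℕ → Fin n → Fin m) :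
    ∃ T : Lp ℝ 1 (volume.restrict (Set.Ico (0 : ℝ) 1)) →L[ℝ]
        Lp ℝ 1 (volume.restrict (Set.Ico (0 : ℝ) 1)),
      (∀ j, 1 ≤ j → j ≤ N →
        ∀ f : Lp ℝ 1 (volume.restrict (Set.Ico (0 : ℝ) 1)),
          (f : ℝ → ℝ) =ᵐ[volume.restrict (Set.Ico (0 : ℝ) 1)]
            (fun t => (N : ℝ) *
              Set.indicator (Set.Ico (((j : ℝ) - 1) / N) ((j : ℝ) / N)) (fun _ => (1 : ℝ)) t) →
          (T f : ℝ → ℝ) =ᵐ[volume.restrict (Set.Ico (0 : ℝ) 1)] xfun n m N idx j) ∧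
      ‖ContinuousLinearMap.id ℝ (Lp ℝ 1 (volume.restrict (Set.Ico (0 : ℝ) 1))) - T‖ ≤ ε := by
  have hnm : (n : ℝ) / m ≤ ε := by
    rcases eq_or_ne (n : ℝ) 0 with hn | hn
    · rw [hn, zero_div]; exact hε.le
    · rw [hm, div_div_cancel₀ hn]
  set S := sumSetIntegralSMul μ₀ (Finset.Ioc n N) (gridIco N) (gridBump n m N idx)
  refine ⟨ContinuousLinearMap.id ℝ _ + S, fun j hj1 hjN f hf => ?_, ?_⟩
  · have hf' : f =ᵐ[μ₀] (gridIco N j).indicator fun _ => (N : ℝ) :=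
      hf.trans (.of_eq (funext fun t => by rw [gridIco, ← Set.indicator_const_mul, mul_one]))
    have hSf : S f = if j ∈ Finset.Ioc n N then gridBump n m N idx j else 0 :=
      sumSetIntegralSMul_apply_of_ae_eq_indicator (measurableSet_gridIco N)
        (pairwise_disjoint_gridIco N) hf' (measureReal_gridIco_mul hj1 hjN)
    rw [add_apply, ContinuousLinearMap.id_apply, hSf]
    by_cases hjn : j ≤ n
    · rw [if_neg (by simp [hjn]), add_zero]
      exact hf.trans (.of_eq (funext fun t => (if_pos hjn).symm))
    · rw [if_pos (Finset.mem_Ioc.2 ⟨not_le.1 hjn, hjN⟩)]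
      filter_upwards [Lp.coeFn_add f _, hf, coeFn_gridBump n m N idx j] with t hadd hft hbump
      rw [hadd, Pi.add_apply, hft, hbump, xfun, if_neg hjn, add_comm]
  · rw [show ContinuousLinearMap.id ℝ _ - (ContinuousLinearMap.id ℝ _ + S) = -S by abel, norm_neg]
    exact norm_sumSetIntegralSMul_le (measurableSet_gridIco N) (pairwise_disjoint_gridIco N)
      hε.le fun j _ => (norm_gridBump_le n m N idx j).trans hnm

theorem stmt0 (n m N : ℕ) (ε : ℝ) (hn : 0 < n) (hε : 0 < ε) (hε1 : ε < 1)
    (hm : (m : ℝ) = n / ε) (hN : N = n + m ^ n)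
    (idx : ℕ → Fin n → Fin m) (hidx : Set.BijOn idx (Set.Ioc n N) Set.univ) :
    ∃ T : Lp ℝ 1 (volume.restrict (Set.Ico (0 : ℝ) 1)) →L[ℝ]
        Lp ℝ 1 (volume.restrict (Set.Ico (0 : ℝ) 1)),
      (∀ j, 1 ≤ j → j ≤ N →
        ∀ f : Lp ℝ 1 (volume.restrict (Set.Ico (0 : ℝ) 1)),
          (f : ℝ → ℝ) =ᵐ[volume.restrict (Set.Ico (0 : ℝ) 1)]
            (fun t => (N : ℝ) *
              Set.indicator (Set.Ico (((j : ℝ) - 1) / N) ((j : ℝ) / N)) (fun _ => (1 : ℝ)) t) →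
          (T f : ℝ → ℝ) =ᵐ[volume.restrict (Set.Ico (0 : ℝ) 1)] xfun n m N idx j) ∧
      ‖ContinuousLinearMap.id ℝ (Lp ℝ 1 (volume.restrict (Set.Ico (0 : ℝ) 1))) - T‖ ≤ ε :=
  stmt0_general n m N ε hε hm idx
end

section
/- For every choice of real scalars (a_j)_{j=1}^N one has (1−ε)·∑_{j=1}^N |a_j| ≤ ‖∑_{j=1}^N a_j x_j‖_{L_1[0,1]} ≤ (1+ε)·∑_{j=1}^N |a_j|; that is, the basis (x_j)_{j=1}^N of X^N is (1±ε)-equivalent to the unit vector basis of ℓ_1^N. -/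
/-!
Cut `[0,1)` into the `m * N` cells `I_k(i)`, `k ≤ N`, `i ≤ m` (the formula for `I_k(i)` makes sense
for `k > n` as well). On each cell `∑ a_j x_j` is constant, equal to `N (a_k + c_{k,i})`, where
`c_{k,i}` is the sum of those `a_j`, `j > n`, for which `x_j` has its bump in block `k ≤ n` on
`I_k(i)`. So the `L_1` norm is `(1/m) ∑_{k,i} |a_k + c_{k,i}|`, which differs from `∑_j |a_j|` by
at most `(1/m) ∑_{k,i} |c_{k,i}| ≤ (n/m) ∑_{j > n} |a_j| = ε ∑_{j > n} |a_j|`, since every `x_j`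
with `j > n` has exactly one bump in each of the first `n` blocks.
-/

open MeasureTheory Set Finset

theorem setIntegral_Ico_eq_sum_Ico_succ {E : Type*} [NormedAddCommGroup E] [NormedSpace ℝ E]
    {μ : Measure ℝ} {g : ℝ → E} {f : ℕ → ℝ} (hf : Monotone f) (D : ℕ)
    (hg : IntegrableOn g (Ico (f 0) (f D)) μ) :
    ∫ t in Ico (f 0) (f D), g t ∂μ = ∑ s ∈ range D, ∫ t in Ico (f s) (f (s + 1)), g t ∂μ := by
  induction D with
  | zero => simp
  | succ D ih =>
    have hsplit := Ico_union_Ico_eq_Ico (hf (Nat.zero_le D)) (hf D.le_succ)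
    rw [← hsplit] at hg
    rw [← hsplit, setIntegral_union Ico_disjoint_Ico_same measurableSet_Ico
      (hg.mono_set subset_union_left) (hg.mono_set subset_union_right),
      ih (hg.mono_set subset_union_left), sum_range_succ]

theorem mem_Ico_div_iff_floor_mul_eq {D t : ℝ} (hD : 0 < D) (ht : 0 ≤ t) (k : ℕ) :
    t ∈ Ico (k / D) ((k + 1) / D) ↔ ⌊t * D⌋₊ = k := by
  rw [Nat.floor_eq_iff (by positivity), Set.mem_Ico, div_le_iff₀ hD, lt_div_iff₀ hD]

theorem Nat.mul_add_eq_mul_add_iff {m k i q r : ℕ} (hi : i < m) (hr : r < m) :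
    k * m + i = q * m + r ↔ k = q ∧ i = r := by
  refine ⟨fun h => ?_, fun ⟨hk, hi⟩ => hk ▸ hi ▸ rfl⟩
  have hm : 0 < m := by omega
  have hdiv := congrArg (· / m) h
  have hmod := congrArg (· % m) h
  simp only [Nat.mul_comm _ m, Nat.mul_add_div hm, Nat.mul_add_mod, Nat.div_eq_of_lt hi,
    Nat.div_eq_of_lt hr, Nat.mod_eq_of_lt hi, Nat.mod_eq_of_lt hr, add_zero] at hdiv hmod
  exact ⟨hdiv, hmod⟩

theorem abs_sum_abs_add_sub_sum_abs_le {ι : Type*} (s : Finset ι) (x y : ι → ℝ) :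
    |(∑ i ∈ s, |x i + y i|) - (∑ i ∈ s, |x i|)| ≤ ∑ i ∈ s, |y i| := by
  rw [← sum_sub_distrib]
  refine (abs_sum_le_sum_abs _ _).trans (sum_le_sum fun i _ => ?_)
  simpa using abs_abs_sub_abs_le_abs_sub (x i + y i) (x i)

theorem sum_Icc_one_eq_sum_range_succ {M : Type*} [AddCommMonoid M] (N : ℕ) (f : ℕ → M) :
    ∑ j ∈ Finset.Icc 1 N, f j = ∑ q ∈ range N, f (q + 1) := by
  rw [range_eq_Ico, ← Finset.Ico_add_one_right_eq_Icc, sum_Ico_add']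

theorem Ik_succ_succ {m N : ℕ} (hm : 0 < m) (k i : ℕ) :
    Ik m N (k + 1) (i + 1) =
      Set.Ico (((k * m + i : ℕ) : ℝ) / (m * N)) (((k * m + i : ℕ) + 1 : ℝ) / (m * N)) := by
  have : (m : ℝ) ≠ 0 := by positivity
  unfold Ik
  congr 1 <;> push_cast <;> field_simp <;> ring

section Cells

variable {m N q r : ℕ} {t : ℝ}

theorem nonneg_of_mem_Ik (ht : t ∈ Ik m N (q + 1) (r + 1)) : 0 ≤ t := by
  refine le_trans ?_ ht.1
  push_cast
  simp only [add_sub_cancel_right]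
  positivity

theorem floor_mul_eq_of_mem_Ik (hm : 0 < m) (hN : 0 < N) (ht : t ∈ Ik m N (q + 1) (r + 1)) :
    ⌊t * (m * N)⌋₊ = q * m + r := by
  have ht0 := nonneg_of_mem_Ik ht
  rw [Ik_succ_succ hm] at ht
  exact (mem_Ico_div_iff_floor_mul_eq (by positivity) ht0 _).1 ht

theorem indicator_Ik_of_mem_Ik (hm : 0 < m) (hN : 0 < N) (hr : r < m)
    (ht : t ∈ Ik m N (q + 1) (r + 1)) {k i : ℕ} (hi : i < m) :
    (Ik m N (k + 1) (i + 1)).indicator (fun _ => (1 : ℝ)) t = if (k, i) = (q, r) then 1 else 0 := by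
  have ht0 := nonneg_of_mem_Ik ht
  have hmN : (0 : ℝ) < m * N := by positivity
  simp only [Set.indicator_apply, Ik_succ_succ hm, mem_Ico_div_iff_floor_mul_eq hmN ht0,
    floor_mul_eq_of_mem_Ik hm hN ht, eq_comm (a := q * m + r), Nat.mul_add_eq_mul_add_iff hi hr,
    Prod.mk.injEq]

theorem indicator_block_of_mem_Ik (hm : 0 < m) (hN : 0 < N) (hr : r < m)
    (ht : t ∈ Ik m N (q + 1) (r + 1)) (j : ℕ) :
    (Set.Ico (((j : ℝ) - 1) / N) ((j : ℝ) / N)).indicator (fun _ => (1 : ℝ)) t =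
      if j = q + 1 then 1 else 0 := by
  have ht0 := nonneg_of_mem_Ik ht
  have hfloor : ⌊t * N⌋₊ = q := by
    have : t * N = t * (m * N) / m := by field_simp
    rw [this, Nat.floor_div_natCast, floor_mul_eq_of_mem_Ik hm hN ht,
      Nat.mul_comm, Nat.mul_add_div hm, Nat.div_eq_of_lt hr, add_zero]
  cases j with
  | zero => simp [ht0.not_gt]
  | succ p =>
    simp only [Set.indicator_apply, Nat.cast_add_one, add_sub_cancel_right,
      mem_Ico_div_iff_floor_mul_eq (Nat.cast_pos.2 hN) ht0, hfloor, add_left_inj, eq_comm]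

end Cells

/-- `a (q + 1) + crossTerm n m N idx a q r` is the value of `(1/N) ∑ a_j x_j` on the cell
`Ik m N (q + 1) (r + 1)`: the extra terms are the `a_j`, `j > n`, for which that cell is the bump of
`x_j` in block `q + 1`. -/
noncomputable def crossTerm (n m N : ℕ) (idx : ℕ → Fin n → Fin m) (a : ℕ → ℝ) (q r : ℕ) : ℝ :=
  ∑ j ∈ Finset.Ioc n N, ∑ k : Fin n, if ((k : ℕ), (idx j k : ℕ)) = (q, r) then a j else 0

theorem sum_mul_xfun_of_mem_Ik {n m N q r : ℕ} {t : ℝ} (idx : ℕ → Fin n → Fin m) (a : ℕ → ℝ)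
    (hm : 0 < m) (hq : q < N) (hr : r < m) (ht : t ∈ Ik m N (q + 1) (r + 1)) :
    ∑ j ∈ Finset.Icc 1 N, a j * xfun n m N idx j t =
      N * (a (q + 1) + crossTerm n m N idx a q r) := by
  have hN : 0 < N := by omega
  have hx : ∀ j, a j * xfun n m N idx j t = N * ((if j = q + 1 then a j else 0) +
      if n < j then ∑ k : Fin n, if ((k : ℕ), (idx j k : ℕ)) = (q, r) then a j else 0 else 0) := by
    intro j
    by_cases hj : j ≤ n
    · simp only [xfun, hj, not_lt.2 hj, if_true, if_false, indicator_block_of_mem_Ik hm hN hr ht]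
      split_ifs <;> ring
    · simp only [xfun, hj, not_le.1 hj, if_true, if_false, indicator_block_of_mem_Ik hm hN hr ht,
        indicator_Ik_of_mem_Ik hm hN hr ht (idx j _).isLt, mul_add, mul_sum, mul_ite]
      ring_nf
  have hfilter : {j ∈ Finset.Icc 1 N | n < j} = Finset.Ioc n N := by
    ext j; simp only [mem_filter, Finset.mem_Icc, Finset.mem_Ioc]; omega
  rw [sum_congr rfl fun j _ => hx j, ← mul_sum, sum_add_distrib, sum_ite_eq',
    if_pos (Finset.mem_Icc.2 ⟨by omega, by omega⟩), ← sum_filter, hfilter, crossTerm]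

theorem integrable_xfun (n m N : ℕ) (idx : ℕ → Fin n → Fin m) (j : ℕ) :
    Integrable (xfun n m N idx j) := by
  have hind : ∀ x y : ℝ, Integrable ((Set.Ico x y).indicator fun _ => (1 : ℝ)) :=
    fun x y => (integrableOn_const measure_Ico_lt_top.ne).integrable_indicator measurableSet_Ico
  unfold xfun
  by_cases hj : j ≤ n
  · simpa only [hj, if_true] using (hind _ _).const_mul (N : ℝ)
  · simp only [hj, if_false]
    refine (Integrable.const_mul ?_ _).add ((hind _ _).const_mul _)
    exact integrable_finsetSum _ fun k _ => hind _ _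

theorem setIntegral_Ik {n m N q r : ℕ} (idx : ℕ → Fin n → Fin m) (a : ℕ → ℝ)
    (hm : 0 < m) (hq : q < N) (hr : r < m) :
    ∫ t in Ik m N (q + 1) (r + 1), |∑ j ∈ Finset.Icc 1 N, a j * xfun n m N idx j t| =
      |a (q + 1) + crossTerm n m N idx a q r| / m := by
  have hN : (0 : ℝ) < N := by exact_mod_cast (show 0 < N by omega)
  have hm' : (0 : ℝ) < m := by exact_mod_cast hm
  rw [setIntegral_congr_fun (s := Ik m N (q + 1) (r + 1)) measurableSet_Ico fun t ht => by
      rw [sum_mul_xfun_of_mem_Ik idx a hm hq hr ht],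
    setIntegral_const, Ik_succ_succ hm, Real.volume_real_Ico_of_le (by gcongr; linarith),
    smul_eq_mul, abs_mul, abs_of_pos hN]
  field_simp
  ring

theorem setIntegral_abs_sum_mul_xfun {n m N : ℕ} (idx : ℕ → Fin n → Fin m) (a : ℕ → ℝ)
    (hm : 0 < m) (hN : 0 < N) :
    ∫ t in Set.Ico (0 : ℝ) 1, |∑ j ∈ Finset.Icc 1 N, a j * xfun n m N idx j t| =
      (∑ q ∈ range N, ∑ r ∈ range m, |a (q + 1) + crossTerm n m N idx a q r|) / m := by
  set g := fun t => |∑ j ∈ Finset.Icc 1 N, a j * xfun n m N idx j t|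
  have hg : Integrable g :=
    (integrable_finsetSum _ fun j _ => (integrable_xfun n m N idx j).const_mul (a j)).abs
  have hm' : (0 : ℝ) < m := by exact_mod_cast hm
  have hN' : (0 : ℝ) < N := by exact_mod_cast hN
  have hblock : ∀ q < N, ∫ t in Set.Ico ((q : ℝ) / N) ((q + 1 : ℕ) / N), g t =
      ∑ r ∈ range m, |a (q + 1) + crossTerm n m N idx a q r| / m := by
    intro q hq
    set f := fun r : ℕ => ((q * m + r : ℕ) : ℝ) / (m * N)
    have hf : Monotone f := fun r r' h => by dsimp only [f]; gcongr
    have hcell : ∀ r, Set.Ico (f r) (f (r + 1)) = Ik m N (q + 1) (r + 1) := fun r => by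
      rw [Ik_succ_succ hm]; dsimp only [f]; push_cast; ring_nf
    have hends : Set.Ico ((q : ℝ) / N) ((q + 1 : ℕ) / N) = Set.Ico (f 0) (f m) := by
      simp only [f, add_zero]; push_cast; congr 1 <;> field_simp
    rw [hends, setIntegral_Ico_eq_sum_Ico_succ hf m hg.integrableOn]
    exact sum_congr rfl fun r hr => by rw [hcell, setIntegral_Ik idx a hm hq (mem_range.1 hr)]
  have hf : Monotone fun q : ℕ => (q : ℝ) / N := fun q q' h => by dsimp only; gcongr
  have hends : Set.Ico (0 : ℝ) 1 = Set.Ico (((0 : ℕ) : ℝ) / N) ((N : ℝ) / N) := by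
    simp [hN'.ne']
  rw [hends, setIntegral_Ico_eq_sum_Ico_succ hf N (hends ▸ hg.integrableOn), sum_div]
  exact sum_congr rfl fun q hq => by rw [hblock q (mem_range.1 hq), sum_div]

theorem sum_abs_crossTerm_le {n m N : ℕ} (idx : ℕ → Fin n → Fin m) (a : ℕ → ℝ) :
    ∑ p ∈ range N ×ˢ range m, |crossTerm n m N idx a p.1 p.2| ≤
      n * ∑ j ∈ Finset.Ioc n N, |a j| := by
  calc ∑ p ∈ range N ×ˢ range m, |crossTerm n m N idx a p.1 p.2|
      ≤ ∑ p ∈ range N ×ˢ range m, ∑ j ∈ Finset.Ioc n N, ∑ k : Fin n,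
          if ((k : ℕ), (idx j k : ℕ)) = p then |a j| else 0 := by
        gcongr with p
        refine (abs_sum_le_sum_abs _ _).trans (sum_le_sum fun j _ => ?_)
        refine (abs_sum_le_sum_abs _ _).trans (le_of_eq (sum_congr rfl fun k _ => ?_))
        rw [apply_ite abs, abs_zero]
    _ = ∑ j ∈ Finset.Ioc n N, ∑ k : Fin n, ∑ p ∈ range N ×ˢ range m,
          if ((k : ℕ), (idx j k : ℕ)) = p then |a j| else 0 := by
        rw [sum_comm]; exact sum_congr rfl fun j _ => sum_comm
    _ ≤ ∑ j ∈ Finset.Ioc n N, ∑ _k : Fin n, |a j| := by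
        gcongr with j _ k
        rw [sum_ite_eq]
        split_ifs <;> simp
    _ = n * ∑ j ∈ Finset.Ioc n N, |a j| := by
        rw [mul_sum]; simp

theorem abs_setIntegral_abs_sum_mul_xfun_sub_le {n m N : ℕ} (idx : ℕ → Fin n → Fin m)
    (a : ℕ → ℝ) (hm : 0 < m) (hN : 0 < N) :
    |(∫ t in Set.Ico (0 : ℝ) 1, |∑ j ∈ Finset.Icc 1 N, a j * xfun n m N idx j t|) -
        (∑ j ∈ Finset.Icc 1 N, |a j|)| ≤ n / m * ∑ j ∈ Finset.Icc 1 N, |a j| := by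
  have hm' : (0 : ℝ) < m := by exact_mod_cast hm
  have hA : (∑ j ∈ Finset.Icc 1 N, |a j|) * m = ∑ p ∈ range N ×ˢ range m, |a (p.1 + 1)| := by
    rw [sum_product, sum_Icc_one_eq_sum_range_succ, sum_mul]
    simp only [sum_const, card_range, nsmul_eq_mul, mul_comm]
  have hcross : ∑ j ∈ Finset.Ioc n N, |a j| ≤ ∑ j ∈ Finset.Icc 1 N, |a j| :=
    sum_le_sum_of_subset_of_nonneg
      (fun j hj => by simp only [Finset.mem_Ioc, Finset.mem_Icc] at hj ⊢; omega)
      fun j _ _ => abs_nonneg _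
  set A := ∑ j ∈ Finset.Icc 1 N, |a j|
  rw [setIntegral_abs_sum_mul_xfun idx a hm hN,
    ← sum_product' (f := fun q r => |a (q + 1) + crossTerm n m N idx a q r|),
    show ∀ S : ℝ, S / m - A = (S - A * m) / m from fun S => by field_simp, hA, abs_div,
    abs_of_pos hm', div_le_iff₀ hm']
  calc _ ≤ ∑ p ∈ range N ×ˢ range m, |crossTerm n m N idx a p.1 p.2| :=
        abs_sum_abs_add_sub_sum_abs_le _ _ _
    _ ≤ n * A := (sum_abs_crossTerm_le idx a).trans (by gcongr)
    _ = _ := by field_simp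

theorem stmt1_general (n m N : ℕ) (ε : ℝ) (hn : 0 < n) (hε : 0 < ε)
    (hm : (m : ℝ) = n / ε) (hN : N = n + m ^ n)
    (idx : ℕ → Fin n → Fin m)
    (a : ℕ → ℝ) :
    (1 - ε) * ∑ j ∈ Finset.Icc 1 N, |a j| ≤
        ∫ t in Set.Ico (0 : ℝ) 1, |∑ j ∈ Finset.Icc 1 N, a j * xfun n m N idx j t| ∧
      ∫ t in Set.Ico (0 : ℝ) 1, |∑ j ∈ Finset.Icc 1 N, a j * xfun n m N idx j t| ≤
        (1 + ε) * ∑ j ∈ Finset.Icc 1 N, |a j| := by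
  have hm0 : 0 < m := by
    have : (0 : ℝ) < m := hm ▸ div_pos (Nat.cast_pos.2 hn) hε
    exact_mod_cast this
  have hnm : (n : ℝ) / m = ε := by
    rw [hm]; field_simp
  have key := abs_setIntegral_abs_sum_mul_xfun_sub_le idx a hm0 (by omega : 0 < N)
  rw [hnm, abs_sub_le_iff] at key
  constructor <;> linarith

theorem stmt1 (n m N : ℕ) (ε : ℝ) (hn : 0 < n) (hε : 0 < ε) (hε1 : ε < 1)
    (hm : (m : ℝ) = n / ε) (hN : N = n + m ^ n)
    (idx : ℕ → Fin n → Fin m) (hidx : Set.BijOn idx (Set.Ioc n N) Set.univ)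
    (a : ℕ → ℝ) :
    (1 - ε) * ∑ j ∈ Finset.Icc 1 N, |a j| ≤
        ∫ t in Set.Ico (0 : ℝ) 1, |∑ j ∈ Finset.Icc 1 N, a j * xfun n m N idx j t| ∧
      ∫ t in Set.Ico (0 : ℝ) 1, |∑ j ∈ Finset.Icc 1 N, a j * xfun n m N idx j t| ≤
        (1 + ε) * ∑ j ∈ Finset.Icc 1 N, |a j| :=
  stmt1_general n m N ε hn hε hm hN idx a
end

section
/- Suppose A_p > 0 is a constant satisfying the lower Khintchine inequality for exponent p, i.e. A_p·(∑_{j=1}^N |a_j|^2)^{1/2} ≤ (∫_0^1 |∑_{j=1}^N a_j R_j(s)|^p ds)^{1/p} for all real scalars (a_j)_{j=1}^N. Then every x ∈ X^N satisfies the Nikol'skii-type inequality sup_{t∈[0,1]} |x(t)| ≤ A_p^{−1}·N^{1/p}·‖x‖_{L_p[0,1]}. -/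
open MeasureTheory Set Finset

/-- The `n`-th Rademacher function `R_n = ∑_{j=1}^{2^n} (−1)^j 𝟙_{[(j−1)/2^n, j/2^n)}`,
regarded as a function on `ℝ` vanishing outside `[0,1)`. -/
noncomputable def Rad (n : ℕ) : ℝ → ℝ :=
  fun t => ∑ j ∈ Finset.Icc (1 : ℕ) (2 ^ n), (-1 : ℝ) ^ j *
    Set.indicator (Set.Ico (((j : ℝ) - 1) / 2 ^ n) ((j : ℝ) / 2 ^ n)) (fun _ => (1 : ℝ)) t

/-- The function `y_j(t) = N^{1/p−1/2}·R_j(N^{1−p/2}·t)`. -/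
noncomputable def yfun (p : ℝ) (N : ℕ) (j : ℕ) : ℝ → ℝ :=
  fun t => (N : ℝ) ^ (1 / p - 1 / 2) * Rad j ((N : ℝ) ^ (1 - p / 2) * t)

lemma Rad_eq_zero (n : ℕ) {s : ℝ} (hs : s ∉ Set.Ico (0 : ℝ) 1) : Rad n s = 0 := by
  have hpos : (0:ℝ) < 2 ^ n := by positivity
  apply Finset.sum_eq_zero
  intro k hk
  rw [Finset.mem_Icc] at hk
  rw [Set.indicator_of_notMem, mul_zero]
  intro hmem
  apply hs
  obtain ⟨h1, h2⟩ := hmem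
  have hk1 : (1:ℝ) ≤ (k:ℝ) := by exact_mod_cast hk.1
  have hk2 : (k:ℝ) ≤ 2 ^ n := by exact_mod_cast hk.2
  constructor
  · exact le_trans (div_nonneg (by linarith) hpos.le) h1
  · exact lt_of_lt_of_le h2 ((div_le_one hpos).mpr hk2)

lemma Rad_eq_pow (n : ℕ) {s : ℝ} (h0 : 0 ≤ s) (h1 : s < 1) :
    Rad n s = (-1 : ℝ) ^ (⌊(2:ℝ) ^ n * s⌋₊ + 1) := by
  have hpos : (0:ℝ) < 2 ^ n := by positivity
  have hns : 0 ≤ (2:ℝ) ^ n * s := by positivity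
  set m := ⌊(2:ℝ) ^ n * s⌋₊ with hm
  have hmlt : m < 2 ^ n := by
    rw [hm, Nat.floor_lt hns]
    push_cast
    exact mul_lt_of_lt_one_right hpos h1
  have hmem : m + 1 ∈ Finset.Icc 1 (2 ^ n) := by
    rw [Finset.mem_Icc]; omega
  have hfl : ((m:ℝ)) ≤ (2:ℝ) ^ n * s := Nat.floor_le hns
  have hfu : (2:ℝ) ^ n * s < (m:ℝ) + 1 := Nat.lt_floor_add_one _
  rw [Rad, Finset.sum_eq_single_of_mem (m + 1) hmem]
  · rw [Set.indicator_of_mem, mul_one]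
    constructor
    · rw [div_le_iff₀ hpos]
      push_cast
      linarith
    · rw [lt_div_iff₀ hpos]
      push_cast
      linarith
  · intro k hk hne
    rw [Set.indicator_of_notMem, mul_zero]
    intro hmem2
    apply hne
    rw [Finset.mem_Icc] at hk
    obtain ⟨hl, hr⟩ := hmem2
    rw [div_le_iff₀ hpos] at hl
    rw [lt_div_iff₀ hpos] at hr
    have hkey : ⌊(2:ℝ) ^ n * s⌋₊ = k - 1 := by
      rw [Nat.floor_eq_iff hns, Nat.cast_sub hk.1]
      push_cast
      constructor <;> linarith
    omega

lemma abs_Rad_le (n : ℕ) (s : ℝ) : |Rad n s| ≤ 1 := by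
  by_cases hs : s ∈ Set.Ico (0 : ℝ) 1
  · rw [Rad_eq_pow n hs.1 hs.2, abs_pow, abs_neg, abs_one, one_pow]
  · rw [Rad_eq_zero n hs, abs_zero]; exact zero_le_one

theorem stmt8 (p : ℝ) (hp1 : 1 ≤ p) (hp2 : p < 2) (N : ℕ) (hN : 0 < N)
    (Ap : ℝ) (hAp : 0 < Ap)
    (hKh : ∀ a : ℕ → ℝ,
      Ap * (∑ j ∈ Finset.Icc 1 N, |a j| ^ 2) ^ ((1 : ℝ) / 2) ≤
        (∫ s in Set.Ico (0 : ℝ) 1, |∑ j ∈ Finset.Icc 1 N, a j * Rad j s| ^ p) ^ (1 / p)) :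
    ∀ x ∈ Submodule.span ℝ (yfun p N '' Set.Icc 1 N), ∀ t ∈ Set.Icc (0 : ℝ) 1,
      |x t| ≤ Ap⁻¹ * (N : ℝ) ^ (1 / p) *
        (∫ s in Set.Ico (0 : ℝ) 1, |x s| ^ p) ^ (1 / p) := by
  have hp0 : (0:ℝ) < p := lt_of_lt_of_le one_pos hp1
  have hpne : p ≠ 0 := hp0.ne'
  intro x hx t ht
  obtain ⟨l, hl, rfl⟩ := (Finsupp.mem_span_image_iff_linearCombination ℝ).mp hx
  set a : ℕ → ℝ := fun j => l j with ha
  set c : ℝ := (N : ℝ) ^ (1 - p / 2) with hc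
  set C : ℝ := (N : ℝ) ^ (1 / p - 1 / 2) with hC
  have hNpos : (0:ℝ) < N := by exact_mod_cast hN
  have hcpos : 0 < c := Real.rpow_pos_of_pos hNpos _
  have hCpos : 0 < C := Real.rpow_pos_of_pos hNpos _
  have hc1 : 1 ≤ c := Real.one_le_rpow (by exact_mod_cast hN) (by linarith)
  set f : ℝ → ℝ := fun u => ∑ j ∈ Finset.Icc 1 N, a j * Rad j u with hf
  set F : ℝ → ℝ := (Finsupp.linearCombination ℝ (yfun p N) l : ℝ → ℝ) with hFdef
  have hsupp : l.support ⊆ Finset.Icc 1 N := by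
    intro j hj
    have := hl hj
    rw [Set.mem_Icc] at this
    rw [Finset.mem_Icc]
    exact this
  have hxrep : ∀ u : ℝ, F u = C * f (c * u) := by
    intro u
    calc F u = ∑ j ∈ l.support, l j * yfun p N j u := by
          rw [hFdef, Finsupp.linearCombination_apply, Finsupp.sum, Finset.sum_apply]
          rfl
      _ = ∑ j ∈ Finset.Icc 1 N, l j * yfun p N j u := by
          apply Finset.sum_subset hsupp
          intro j _ hj
          rw [Finsupp.notMem_support_iff.mp hj, zero_mul]
      _ = C * f (c * u) := by
          rw [hf, Finset.mul_sum]
          apply Finset.sum_congr rfl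
          intro j _
          simp only [yfun, ha]
          ring
  -- pointwise bound
  set S : ℝ := (∑ j ∈ Finset.Icc 1 N, |a j| ^ 2) ^ ((1:ℝ) / 2) with hS
  have habsf : ∀ u : ℝ, |f u| ≤ ∑ j ∈ Finset.Icc 1 N, |a j| := by
    intro u
    refine le_trans (Finset.abs_sum_le_sum_abs _ _) (Finset.sum_le_sum fun j _ => ?_)
    rw [abs_mul]
    exact mul_le_of_le_one_right (abs_nonneg _) (abs_Rad_le j _)
  have hsum_le : ∑ j ∈ Finset.Icc 1 N, |a j| ≤ (N : ℝ) ^ ((1:ℝ)/2) * S := by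
    have h1 : (∑ j ∈ Finset.Icc 1 N, |a j|) ^ 2 ≤
        (N : ℝ) * ∑ j ∈ Finset.Icc 1 N, |a j| ^ 2 := by
      have := sq_sum_le_card_mul_sum_sq (s := Finset.Icc 1 N) (f := fun j => |a j|)
      simpa [Nat.card_Icc] using this
    have hnn : 0 ≤ ∑ j ∈ Finset.Icc 1 N, |a j| :=
      Finset.sum_nonneg fun j _ => abs_nonneg _
    have hTnn : 0 ≤ ∑ j ∈ Finset.Icc 1 N, |a j| ^ 2 :=
      Finset.sum_nonneg fun j _ => sq_nonneg _
    calc ∑ j ∈ Finset.Icc 1 N, |a j|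
        = Real.sqrt ((∑ j ∈ Finset.Icc 1 N, |a j|) ^ 2) := (Real.sqrt_sq hnn).symm
      _ ≤ Real.sqrt ((N : ℝ) * ∑ j ∈ Finset.Icc 1 N, |a j| ^ 2) := Real.sqrt_le_sqrt h1
      _ = (N : ℝ) ^ ((1:ℝ)/2) * S := by
          rw [Real.sqrt_mul hNpos.le, Real.sqrt_eq_rpow, Real.sqrt_eq_rpow, hS]
  have hpoint : |F t| ≤ (N : ℝ) ^ ((1:ℝ)/p) * S := by
    have : |F t| ≤ C * ((N : ℝ) ^ ((1:ℝ)/2) * S) := by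
      rw [hxrep t, abs_mul, abs_of_pos hCpos]
      exact mul_le_mul_of_nonneg_left (le_trans (habsf _) hsum_le) hCpos.le
    refine le_trans this (le_of_eq ?_)
    rw [← mul_assoc, hC, ← Real.rpow_add hNpos]
    norm_num
  -- support facts
  have hf0 : ∀ u : ℝ, u ∉ Set.Ico (0:ℝ) 1 → f u = 0 := by
    intro u hu
    apply Finset.sum_eq_zero
    intro j _
    rw [Rad_eq_zero j hu, mul_zero]
  have hF0 : ∀ s : ℝ, s ∉ Set.Ico (0:ℝ) 1 → F s = 0 := by
    intro s hs
    rw [hxrep s]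
    have hcs : c * s ∉ Set.Ico (0:ℝ) 1 := by
      rw [Set.mem_Ico] at hs ⊢
      push_neg at hs ⊢
      intro hcs0
      have hs0 : 0 ≤ s := by nlinarith
      have hs1 : 1 ≤ s := hs hs0
      nlinarith
    rw [hf0 _ hcs, mul_zero]
  -- integral identity
  have key : (∫ s in Set.Ico (0:ℝ) 1, |F s| ^ p) = ∫ s in Set.Ico (0:ℝ) 1, |f s| ^ p := by
    rw [setIntegral_eq_integral_of_forall_compl_eq_zero
        (fun s hs => by rw [hF0 s hs, abs_zero, Real.zero_rpow hpne]),
      setIntegral_eq_integral_of_forall_compl_eq_zero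
        (fun s hs => by rw [hf0 s hs, abs_zero, Real.zero_rpow hpne])]
    have hfe : (fun s : ℝ => |F s| ^ p) = fun s : ℝ => (fun u => C ^ p * |f u| ^ p) (c * s) := by
      funext s
      rw [hxrep s, abs_mul, abs_of_pos hCpos, Real.mul_rpow hCpos.le (abs_nonneg _)]
    rw [hfe, MeasureTheory.Measure.integral_comp_mul_left (fun u => C ^ p * |f u| ^ p) c,
      MeasureTheory.integral_const_mul, smul_eq_mul, abs_of_pos (inv_pos.mpr hcpos)]
    have hCp : C ^ p = c := by
      rw [hC, ← Real.rpow_mul hNpos.le, hc]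
      congr 1
      field_simp
    rw [hCp, ← mul_assoc, inv_mul_cancel₀ hcpos.ne', one_mul]
  -- Khintchine lower bound
  have hKh' := hKh a
  have hJ : Ap * S ≤ (∫ s in Set.Ico (0:ℝ) 1, |F s| ^ p) ^ (1/p) := by
    rw [key]; exact hKh'
  have hSle : S ≤ Ap⁻¹ * (∫ s in Set.Ico (0:ℝ) 1, |F s| ^ p) ^ (1/p) := by
    rw [← inv_mul_cancel_left₀ hAp.ne' S]
    exact mul_le_mul_of_nonneg_left hJ (inv_pos.mpr hAp).le
  calc |F t| ≤ (N : ℝ) ^ ((1:ℝ)/p) * S := hpoint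
    _ ≤ (N : ℝ) ^ ((1:ℝ)/p) * (Ap⁻¹ * (∫ s in Set.Ico (0:ℝ) 1, |F s| ^ p) ^ (1/p)) :=
        mul_le_mul_of_nonneg_left hSle (Real.rpow_pos_of_pos hNpos _).le
    _ = Ap⁻¹ * (N : ℝ) ^ (1/p) * (∫ s in Set.Ico (0:ℝ) 1, |F s| ^ p) ^ (1/p) := by ring
end

section
/- Suppose M ∈ ℕ and t_1, …, t_M ∈ [0,1] are such that for every nonzero x ∈ X^N there exists some 1 ≤ j ≤ M with x(t_j) ≠ 0. Then ∑_{j=1}^M |y_1(t_j)|^p ≥ N^{2−p/2}. Since ‖y_1‖_{L_p[0,1]} = 1, equivalently (N^{2−p/2}/M)·‖y_1‖_{L_p}^p ≤ (1/M)·∑_{j=1}^M |y_1(t_j)|^p, so the L_p norm on X^N cannot be discretized using a number of sampling points proportional to N. -/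
open MeasureTheory Set Finset

lemma rad_eval (n : ℕ) (x : ℝ) (j₀ : ℕ) (h1 : 1 ≤ j₀) (h2 : j₀ ≤ 2 ^ n)
    (hl : ((j₀ : ℝ) - 1) / 2 ^ n ≤ x) (hr : x < (j₀ : ℝ) / 2 ^ n) :
    Rad n x = (-1 : ℝ) ^ j₀ := by
  have h2n : (0 : ℝ) < 2 ^ n := by positivity
  unfold Rad
  rw [Finset.sum_eq_single j₀]
  · rw [Set.indicator_of_mem (Set.mem_Ico.mpr ⟨hl, hr⟩), mul_one]
  · intro j hj hne
    rw [Set.indicator_of_notMem, mul_zero]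
    intro hmem
    obtain ⟨hl', hr'⟩ := Set.mem_Ico.mp hmem
    rcases lt_or_gt_of_ne hne with h | h
    · have h3 : (j : ℝ) + 1 ≤ j₀ := by exact_mod_cast h
      have h4 : ((j₀ : ℝ) - 1) / 2 ^ n < (j : ℝ) / 2 ^ n := lt_of_le_of_lt hl hr'
      rw [div_lt_div_iff_of_pos_right h2n] at h4
      linarith
    · have h3 : (j₀ : ℝ) + 1 ≤ j := by exact_mod_cast h
      have h4 : ((j : ℝ) - 1) / 2 ^ n < (j₀ : ℝ) / 2 ^ n := lt_of_le_of_lt hl' hr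
      rw [div_lt_div_iff_of_pos_right h2n] at h4
      linarith
  · intro h; exact absurd (Finset.mem_Icc.mpr ⟨h1, h2⟩) h

lemma rad_zero (n : ℕ) (x : ℝ) (h : 1 ≤ x) : Rad n x = 0 := by
  unfold Rad
  apply Finset.sum_eq_zero
  intro j hj
  rw [Set.indicator_of_notMem, mul_zero]
  intro hmem
  obtain ⟨_, hr⟩ := Set.mem_Ico.mp hmem
  have hj2 : (j : ℝ) ≤ 2 ^ n := by exact_mod_cast (Finset.mem_Icc.mp hj).2
  have h2n : (0 : ℝ) < 2 ^ n := by positivity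
  have : (j : ℝ) / 2 ^ n ≤ 1 := by rw [div_le_one h2n]; exact hj2
  linarith

lemma rad_one (u : ℝ) (h0 : 0 ≤ u) (h1 : u < 1) : |Rad 1 u| = 1 := by
  rcases lt_or_ge u (1/2) with h | h
  · rw [rad_eval 1 u 1 le_rfl (by norm_num) (by norm_num; linarith) (by push_cast; linarith)]
    norm_num
  · rw [rad_eval 1 u 2 (by norm_num) (by norm_num) (by push_cast; linarith) (by push_cast; linarith)]
    norm_num

lemma rad_tri (k i : ℕ) (hk : 1 ≤ k) (hi : 1 ≤ i) :
    Rad k (1 - ((2:ℝ) ^ i)⁻¹) = if k ≤ i then 1 else -1 := by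
  have hik : (0:ℝ) < 2 ^ i := by positivity
  have hkk : (0:ℝ) < 2 ^ k := by positivity
  split_ifs with h
  · rw [rad_eval k _ (2 ^ k) Nat.one_le_two_pow le_rfl ?_ ?_]
    · exact Even.neg_one_pow (Nat.even_pow.mpr ⟨even_two, by omega⟩)
    · push_cast
      have h2 : (2:ℝ) ^ k ≤ 2 ^ i := by
        apply pow_le_pow_right₀ (by norm_num) h
      have h3 : ((2:ℝ) ^ i)⁻¹ ≤ ((2:ℝ) ^ k)⁻¹ := by
        exact inv_anti₀ hkk h2
      rw [sub_div, div_self (ne_of_gt hkk), one_div]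
      linarith
    · push_cast
      rw [div_self (ne_of_gt hkk)]
      have : (0:ℝ) < ((2:ℝ) ^ i)⁻¹ := by positivity
      linarith
  · push_neg at h
    have hle : 2 ^ (k - i) ≤ 2 ^ k := Nat.pow_le_pow_right (by norm_num) (Nat.sub_le _ _)
    have h1le : 1 ≤ 2 ^ (k - i) := Nat.one_le_two_pow
    have hcast : ((2 ^ k - 2 ^ (k - i) + 1 : ℕ) : ℝ) = 2 ^ k - 2 ^ k / 2 ^ i + 1 := by
      push_cast [hle]
      rw [pow_sub₀ (2:ℝ) (by norm_num) (le_of_lt h)]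
      ring
    rw [rad_eval k _ (2 ^ k - 2 ^ (k - i) + 1) (by omega) (by omega) ?_ ?_]
    · apply Odd.neg_one_pow
      refine Even.add_one ?_
      rw [Nat.even_sub hle]
      constructor <;> intro
      · exact Nat.even_pow.mpr ⟨even_two, by omega⟩
      · exact Nat.even_pow.mpr ⟨even_two, by omega⟩
    · rw [hcast, div_le_iff₀ hkk]
      exact le_of_eq (by ring)
    · rw [hcast, lt_div_iff₀ hkk]
      have h6 : (1 - ((2:ℝ) ^ i)⁻¹) * 2 ^ k = 2 ^ k - 2 ^ k / 2 ^ i := by ring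
      rw [h6]
      linarith

lemma coeffs_zero {N : ℕ} (c : Fin N → ℝ)
    (E : ∀ i : Fin N, ∑ k : Fin N, c k * (if (k:ℕ) ≤ (i:ℕ) then (1:ℝ) else -1) = 0) :
    c = 0 := by
  have h1 : ∀ i : Fin N, 1 ≤ (i:ℕ) → c i = 0 := by
    intro i hi
    have hi' : (i:ℕ) - 1 < N := lt_of_le_of_lt (Nat.sub_le _ _) i.2
    have e1 := E i
    have e2 := E ⟨(i:ℕ) - 1, hi'⟩
    have key : ∑ k : Fin N, (c k * (if (k:ℕ) ≤ (i:ℕ) then (1:ℝ) else -1)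
        - c k * (if (k:ℕ) ≤ (i:ℕ) - 1 then (1:ℝ) else -1)) = 2 * c i := by
      rw [Finset.sum_eq_single i]
      · rw [if_pos le_rfl, if_neg (by omega)]; ring
      · intro k _ hki
        have hkv : (k:ℕ) ≠ (i:ℕ) := fun hh => hki (Fin.ext hh)
        have hiff : ((k:ℕ) ≤ (i:ℕ)) ↔ ((k:ℕ) ≤ (i:ℕ) - 1) := by omega
        by_cases hk : (k:ℕ) ≤ (i:ℕ) - 1
        · rw [if_pos (hiff.mpr hk), if_pos hk]; ring
        · rw [if_neg (fun hh => hk (hiff.mp hh)), if_neg hk]; ring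
      · intro hh; exact absurd (Finset.mem_univ i) hh
    rw [Finset.sum_sub_distrib, e1] at key
    have e2' : ∑ k : Fin N, c k * (if (k:ℕ) ≤ (i:ℕ) - 1 then (1:ℝ) else -1) = 0 := e2
    rw [e2'] at key
    linarith
  funext i
  rcases Nat.eq_zero_or_pos (i:ℕ) with h0 | hpos
  · have e := E i
    rw [Finset.sum_eq_single i] at e
    · rw [if_pos le_rfl, mul_one] at e; simpa using e
    · intro k _ hk
      rw [h1 k (by have : (k:ℕ) ≠ (i:ℕ) := fun hh => hk (Fin.ext hh); omega)]; ring
    · intro hh; exact absurd (Finset.mem_univ i) hh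
  · simpa using h1 i hpos

theorem stmt9 (p : ℝ) (hp1 : 1 ≤ p) (hp2 : p < 2) (N : ℕ) (hN : 0 < N)
    (M : ℕ) (t : Fin M → ℝ) (ht : ∀ j, t j ∈ Set.Icc (0 : ℝ) 1)
    (hsep : ∀ x ∈ Submodule.span ℝ (yfun p N '' Set.Icc 1 N),
      x ≠ 0 → ∃ j, x (t j) ≠ 0) :
    (N : ℝ) ^ (2 - p / 2) ≤ ∑ j, |yfun p N 1 (t j)| ^ p := by
  have hNpos : (0:ℝ) < N := Nat.cast_pos.mpr hN
  set A := (N:ℝ) ^ (1/p - 1/2) with hA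
  set B := (N:ℝ) ^ (1 - p/2) with hB
  have hApos : 0 < A := Real.rpow_pos_of_pos hNpos _
  have hBpos : 0 < B := Real.rpow_pos_of_pos hNpos _
  have hp0 : p ≠ 0 := by linarith
  have hAp : A ^ p = B := by
    rw [hA, hB, ← Real.rpow_mul (le_of_lt hNpos)]
    congr 1
    field_simp
  have hyfun : ∀ (k : ℕ) (s : ℝ), yfun p N k s = A * Rad k (B * s) := fun _ _ => rfl
  set S : Finset (Fin M) := Finset.univ.filter (fun j => B * t j < 1) with hS
  have hterm : ∀ j ∈ S, |yfun p N 1 (t j)| ^ p = B := by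
    intro j hj
    have hj1 : B * t j < 1 := by
      have := Finset.mem_filter.mp hj
      exact this.2
    have hj0 : 0 ≤ B * t j := mul_nonneg hBpos.le (ht j).1
    rw [hyfun, abs_mul, abs_of_pos hApos, rad_one _ hj0 hj1, mul_one, hAp]
  have hcard : N ≤ S.card := by
    by_contra hlt
    push_neg at hlt
    let L : (Fin N → ℝ) →ₗ[ℝ] ({j // j ∈ S} → ℝ) :=
      { toFun := fun c j => ∑ k : Fin N, c k * yfun p N ((k:ℕ)+1) (t j.1)
        map_add' := by intro a b; funext j; simp [add_mul, Finset.sum_add_distrib]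
        map_smul' := by intro r a; funext j; simp [Finset.mul_sum, mul_assoc] }
    have hni : ¬ Function.Injective L := by
      intro hinj
      have h1 := LinearMap.finrank_le_finrank_of_injective hinj
      simp only [Module.finrank_pi, Fintype.card_coe, Fintype.card_fin] at h1
      omega
    rw [← LinearMap.ker_eq_bot] at hni
    obtain ⟨c, hcK, hc0⟩ := Submodule.exists_mem_ne_zero_of_ne_bot hni
    have hcL : L c = 0 := LinearMap.mem_ker.mp hcK
    set x : ℝ → ℝ := fun s => ∑ k : Fin N, c k * yfun p N ((k:ℕ)+1) s with hx
    have hmem : x ∈ Submodule.span ℝ (yfun p N '' Set.Icc 1 N) := by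
      have hxe : x = ∑ k : Fin N, c k • yfun p N ((k:ℕ)+1) := by
        funext s
        simp [hx, Finset.sum_apply]
      rw [hxe]
      refine Submodule.sum_mem _ (fun k _ => Submodule.smul_mem _ _ (Submodule.subset_span ?_))
      exact ⟨(k:ℕ)+1, ⟨Nat.le_add_left 1 _, Nat.succ_le_of_lt k.2⟩, rfl⟩
    have hxne : x ≠ 0 := by
      intro hzero
      apply hc0
      apply coeffs_zero
      intro i
      set s : ℝ := (1 - ((2:ℝ) ^ ((i:ℕ)+1))⁻¹) / B with hsdef
      have hEv : ∑ k : Fin N, c k * yfun p N ((k:ℕ)+1) s = 0 := by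
        have := congrFun hzero s
        simpa [hx] using this
      have hBval : B * s = 1 - ((2:ℝ) ^ ((i:ℕ)+1))⁻¹ :=
        mul_div_cancel₀ _ (ne_of_gt hBpos)
      have h7 : A * ∑ k : Fin N, c k * (if (k:ℕ) ≤ (i:ℕ) then (1:ℝ) else -1) = 0 := by
        rw [Finset.mul_sum, ← hEv]
        apply Finset.sum_congr rfl
        intro k _
        rw [hyfun, hBval, rad_tri ((k:ℕ)+1) ((i:ℕ)+1) (by omega) (by omega)]
        have hiff : ((k:ℕ)+1 ≤ (i:ℕ)+1) ↔ ((k:ℕ) ≤ (i:ℕ)) := by omega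
        by_cases hki : (k:ℕ) ≤ (i:ℕ)
        · rw [if_pos (hiff.mpr hki), if_pos hki]; ring
        · rw [if_neg (fun hh => hki (hiff.mp hh)), if_neg hki]; ring
      rcases mul_eq_zero.mp h7 with h | h
      · exact absurd h (ne_of_gt hApos)
      · exact h
    obtain ⟨j, hj⟩ := hsep x hmem hxne
    apply hj
    by_cases hjS : j ∈ S
    · have := congrFun hcL ⟨j, hjS⟩
      simpa [hx, L] using this
    · have hge : 1 ≤ B * t j := by
        by_contra hh
        push_neg at hh
        exact hjS (Finset.mem_filter.mpr ⟨Finset.mem_univ j, hh⟩)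
      show (∑ k : Fin N, c k * yfun p N ((k:ℕ)+1) (t j)) = 0
      apply Finset.sum_eq_zero
      intro k _
      rw [hyfun, rad_zero _ _ hge, mul_zero, mul_zero]
  calc (N:ℝ) ^ (2 - p/2) = (N:ℝ) * B := by
        rw [hB, show (2:ℝ) - p/2 = 1 + (1 - p/2) by ring, Real.rpow_add hNpos, Real.rpow_one]
    _ ≤ (S.card : ℝ) * B := by
        apply mul_le_mul_of_nonneg_right _ hBpos.le
        exact_mod_cast hcard
    _ = ∑ _j ∈ S, B := by rw [Finset.sum_const, nsmul_eq_mul]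
    _ = ∑ j ∈ S, |yfun p N 1 (t j)| ^ p := Finset.sum_congr rfl (fun j hj => (hterm j hj).symm)
    _ ≤ ∑ j, |yfun p N 1 (t j)| ^ p := by
        apply Finset.sum_le_sum_of_subset_of_nonneg (Finset.subset_univ S)
        intro j _ _
        exact Real.rpow_nonneg (abs_nonneg _) p
end

section
/- Let 2 < p < ∞, let (Ω,μ) be a probability space, and let x_1, …, x_N : Ω → ℝ be measurable functions with ‖x_j‖_{L_p(μ)} = 1 for all j, spanning a subspace X^N of L_p(μ). Suppose A, B, β > 0 are such that: (i) A·(∑_{j=1}^N |a_j|^2)^{1/2} ≤ ‖∑_{j=1}^N a_j x_j‖_{L_p(μ)} ≤ B·(∑_{j=1}^N |a_j|^2)^{1/2} for all real scalars (a_j)_{j=1}^N, and (ii) |x(t)| ≤ β·N^{1/p}·‖x‖_{L_p(μ)} for all x ∈ X^N and all t ∈ Ω. Suppose moreover B_p > 0 satisfies the upper Khintchine inequality (∫_0^1 |∑_{j=1}^N a_j R_j(s)|^p ds)^{1/p} ≤ B_p·(∑_{j=1}^N |a_j|^2)^{1/2} for all real scalars (a_j)_{j=1}^N, where R_n = ∑_{j=1}^{2^n}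 (−1)^j 𝟙_{[(j−1)/2^n, j/2^n)} is the n-th Rademacher function on [0,1]. Then (A/(B·B_p))·N^{1/2−1/p} ≤ β. -/
open MeasureTheory Set Finset

lemma Rad_measurable (n : ℕ) : Measurable (Rad n) := by
  unfold Rad
  exact Finset.measurable_sum _ fun j _ =>
    ((measurable_const.indicator measurableSet_Ico).const_mul _)

lemma Rad_abs_le (n : ℕ) (s : ℝ) : |Rad n s| ≤ 2 ^ n := by
  unfold Rad
  calc |∑ j ∈ Finset.Icc (1 : ℕ) (2 ^ n), (-1 : ℝ) ^ j *
      Set.indicator (Set.Ico (((j : ℝ) - 1) / 2 ^ n) ((j : ℝ) / 2 ^ n)) (fun _ => (1 : ℝ)) s|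
      ≤ ∑ j ∈ Finset.Icc (1 : ℕ) (2 ^ n), |(-1 : ℝ) ^ j *
        Set.indicator (Set.Ico (((j : ℝ) - 1) / 2 ^ n) ((j : ℝ) / 2 ^ n)) (fun _ => (1 : ℝ)) s| :=
      Finset.abs_sum_le_sum_abs _ _
    _ ≤ ∑ j ∈ Finset.Icc (1 : ℕ) (2 ^ n), 1 := by
      refine Finset.sum_le_sum fun j _ => ?_
      rw [abs_mul, abs_pow, abs_neg, abs_one, one_pow, one_mul]
      by_cases h : s ∈ Set.Ico (((j : ℝ) - 1) / 2 ^ n) ((j : ℝ) / 2 ^ n) <;>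
        simp [Set.indicator_apply, h]
    _ = 2 ^ n := by simp

lemma Rad_abs_eq (n : ℕ) {s : ℝ} (hs : s ∈ Set.Ico (0 : ℝ) 1) : |Rad n s| = 1 := by
  obtain ⟨hs0, hs1⟩ := hs
  have h2 : (0 : ℝ) < 2 ^ n := by positivity
  set k : ℕ := (⌊s * 2 ^ n⌋).toNat with hk
  have hfl : (⌊s * 2 ^ n⌋ : ℝ) ≤ s * 2 ^ n := Int.floor_le _
  have hfl0 : (0 : ℤ) ≤ ⌊s * 2 ^ n⌋ := Int.floor_nonneg.2 (by positivity)
  have hkk : (k : ℤ) = ⌊s * 2 ^ n⌋ := Int.toNat_of_nonneg hfl0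
  have hk1 : (k : ℝ) ≤ s * 2 ^ n := by
    rw [show ((k : ℝ)) = ((k : ℤ) : ℝ) by push_cast; ring, hkk]; exact hfl
  have hk2 : s * 2 ^ n < (k : ℝ) + 1 := by
    have := Int.lt_floor_add_one (s * 2 ^ n)
    rw [show ((k : ℝ)) = ((k : ℤ) : ℝ) by push_cast; ring, hkk]; exact this
  have hklt : k < 2 ^ n := by
    have : (k : ℝ) < 2 ^ n := lt_of_le_of_lt hk1 (by nlinarith)
    exact_mod_cast this
  have hmem : k + 1 ∈ Finset.Icc (1 : ℕ) (2 ^ n) := by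
    simp [Finset.mem_Icc]; omega
  have hval : Rad n s = (-1 : ℝ) ^ (k + 1) := by
    unfold Rad
    rw [Finset.sum_eq_single_of_mem (k + 1) hmem]
    · have hin : s ∈ Set.Ico ((((k + 1 : ℕ) : ℝ) - 1) / 2 ^ n) (((k + 1 : ℕ) : ℝ) / 2 ^ n) := by
        constructor
        · push_cast; rw [div_le_iff₀ h2]; linarith
        · push_cast; rw [lt_div_iff₀ h2]; linarith
      rw [Set.indicator_of_mem hin, mul_one]
    · intro j hj hne
      rw [Finset.mem_Icc] at hj
      have hout : s ∉ Set.Ico (((j : ℝ) - 1) / 2 ^ n) ((j : ℝ) / 2 ^ n) := by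
        intro hin
        obtain ⟨hl, hr⟩ := hin
        rw [div_le_iff₀ h2] at hl
        rw [lt_div_iff₀ h2] at hr
        have h1 : (j : ℝ) < (k : ℝ) + 2 := by linarith
        have h2' : (k : ℝ) < (j : ℝ) := by linarith
        have : j < k + 2 := by exact_mod_cast h1
        have : k < j := by exact_mod_cast h2'
        omega
      rw [Set.indicator_of_notMem hout, mul_zero]
  rw [hval, abs_pow, abs_neg, abs_one, one_pow]

lemma Rad_sq (n : ℕ) {s : ℝ} (hs : s ∈ Set.Ico (0 : ℝ) 1) : (Rad n s) ^ 2 = 1 := by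
  rw [← sq_abs, Rad_abs_eq n hs, one_pow]


theorem stmt10 {Ω : Type*} [MeasurableSpace Ω] (μ : Measure Ω) [IsProbabilityMeasure μ]
    (p : ℝ) (hp : 2 < p) (N : ℕ) (hN : 0 < N) (x : ℕ → Ω → ℝ)
    (hmeas : ∀ j ∈ Finset.Icc 1 N, Measurable (x j))
    (hunit : ∀ j ∈ Finset.Icc 1 N, (∫ t, |x j t| ^ p ∂μ) ^ (1 / p) = 1)
    (A B β Bp : ℝ) (hA : 0 < A) (hB : 0 < B) (hβ : 0 < β) (hBp : 0 < Bp)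
    (hiso : ∀ a : ℕ → ℝ,
      A * (∑ j ∈ Finset.Icc 1 N, |a j| ^ 2) ^ ((1 : ℝ) / 2) ≤
          (∫ t, |∑ j ∈ Finset.Icc 1 N, a j * x j t| ^ p ∂μ) ^ (1 / p) ∧
        (∫ t, |∑ j ∈ Finset.Icc 1 N, a j * x j t| ^ p ∂μ) ^ (1 / p) ≤
          B * (∑ j ∈ Finset.Icc 1 N, |a j| ^ 2) ^ ((1 : ℝ) / 2))
    (hNik : ∀ f ∈ Submodule.span ℝ (x '' Set.Icc 1 N), ∀ t : Ω,
      |f t| ≤ β * (N : ℝ) ^ (1 / p) * (∫ s, |f s| ^ p ∂μ) ^ (1 / p))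
    (hKh : ∀ a : ℕ → ℝ,
      (∫ s in Set.Ico (0 : ℝ) 1, |∑ j ∈ Finset.Icc 1 N, a j * Rad j s| ^ p) ^ (1 / p) ≤
        Bp * (∑ j ∈ Finset.Icc 1 N, |a j| ^ 2) ^ ((1 : ℝ) / 2)) :
    A / (B * Bp) * (N : ℝ) ^ ((1 : ℝ) / 2 - 1 / p) ≤ β := by
  have hp0 : (0 : ℝ) < p := by linarith
  have hp0' : p ≠ 0 := ne_of_gt hp0
  have hNpos : (0 : ℝ) < (N : ℝ) := by exact_mod_cast hN
  -- every x j is in the span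
  have hspan : ∀ j ∈ Finset.Icc 1 N, x j ∈ Submodule.span ℝ (x '' Set.Icc 1 N) := by
    intro j hj
    exact Submodule.subset_span ⟨j, by simpa [Set.mem_Icc] using Finset.mem_Icc.1 hj, rfl⟩
  -- pointwise bound on each x j
  have hxbd : ∀ j ∈ Finset.Icc 1 N, ∀ t, |x j t| ≤ β * (N : ℝ) ^ (1 / p) := by
    intro j hj t
    have := hNik (x j) (hspan j hj) t
    rwa [hunit j hj, mul_one] at this
  -- key pointwise ℓ² bound
  have key : ∀ t, (∑ j ∈ Finset.Icc 1 N, |x j t| ^ 2) ^ ((1 : ℝ) / 2) ≤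
      β * (N : ℝ) ^ (1 / p) * B := by
    intro t
    set S : ℝ := ∑ j ∈ Finset.Icc 1 N, |x j t| ^ 2 with hS
    have hS0 : 0 ≤ S := Finset.sum_nonneg fun j _ => by positivity
    set f : Ω → ℝ := ∑ j ∈ Finset.Icc 1 N, (x j t) • x j with hf
    have hfmem : f ∈ Submodule.span ℝ (x '' Set.Icc 1 N) :=
      Submodule.sum_mem _ fun j hj => Submodule.smul_mem _ _ (hspan j hj)
    have hfeval : ∀ ω, f ω = ∑ j ∈ Finset.Icc 1 N, x j t * x j ω := by
      intro ω; rw [hf, Finset.sum_apply]; simp [smul_eq_mul]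
    have h1 := hNik f hfmem t
    have h2 := (hiso (fun j => x j t)).2
    have hft : f t = S := by
      rw [hfeval t, hS]
      exact Finset.sum_congr rfl fun j _ => by rw [sq_abs]; ring
    have hfi : (∫ s, |f s| ^ p ∂μ) =
        ∫ s, |∑ j ∈ Finset.Icc 1 N, x j t * x j s| ^ p ∂μ := by
      congr 1; funext s; rw [hfeval s]
    rw [hft, hfi] at h1
    have h3 : S ≤ β * (N : ℝ) ^ (1 / p) * (B * S ^ ((1 : ℝ) / 2)) := by
      calc S = |S| := (abs_of_nonneg hS0).symm
        _ ≤ β * (N : ℝ) ^ (1 / p) *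
            (∫ s, |∑ j ∈ Finset.Icc 1 N, x j t * x j s| ^ p ∂μ) ^ (1 / p) := h1
        _ ≤ β * (N : ℝ) ^ (1 / p) * (B * S ^ ((1 : ℝ) / 2)) := by
            refine mul_le_mul_of_nonneg_left h2 (by positivity)
    set u : ℝ := S ^ ((1 : ℝ) / 2) with hu
    have hu0 : 0 ≤ u := Real.rpow_nonneg hS0 _
    have huu : u * u = S := by
      rw [hu, ← Real.rpow_add' hS0 (by norm_num)]
      norm_num
    set c : ℝ := β * (N : ℝ) ^ (1 / p) * B with hc
    have hc0 : 0 ≤ c := by positivity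
    have h4 : u * u ≤ c * u := by rw [huu]; calc S ≤ _ := h3
                                                 _ = c * u := by rw [hc, hu]; ring
    nlinarith [sq_nonneg (u - c)]
  -- the product integrand and its integrability
  set μ₀ : Measure ℝ := volume.restrict (Set.Ico (0 : ℝ) 1) with hμ₀
  have hμ₀prob : IsProbabilityMeasure μ₀ := by
    constructor; rw [hμ₀, Measure.restrict_apply_univ, Real.volume_Ico]; norm_num
  set F : ℝ → Ω → ℝ := fun s t => |∑ j ∈ Finset.Icc 1 N, Rad j s * x j t| ^ p with hF
  have hFmeas : Measurable (Function.uncurry F) := by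
    apply Measurable.pow_const
    apply Measurable.abs
    apply Finset.measurable_sum
    intro j hj
    exact ((Rad_measurable j).comp measurable_fst).mul ((hmeas j hj).comp measurable_snd)
  have hFnn : ∀ s t, 0 ≤ F s t := fun s t => Real.rpow_nonneg (abs_nonneg _) p
  set C : ℝ := ((∑ j ∈ Finset.Icc 1 N, (2:ℝ) ^ j) * (β * (N : ℝ) ^ (1 / p))) ^ p with hC
  have hFbd : ∀ s t, F s t ≤ C := by
    intro s t
    rw [hF, hC]
    apply Real.rpow_le_rpow (abs_nonneg _) _ hp0.le
    calc |∑ j ∈ Finset.Icc 1 N, Rad j s * x j t|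
        ≤ ∑ j ∈ Finset.Icc 1 N, |Rad j s * x j t| := Finset.abs_sum_le_sum_abs _ _
      _ ≤ ∑ j ∈ Finset.Icc 1 N, (2:ℝ) ^ j * (β * (N : ℝ) ^ (1 / p)) := by
          refine Finset.sum_le_sum fun j hj => ?_
          rw [abs_mul]
          exact mul_le_mul (Rad_abs_le j s) (hxbd j hj t) (abs_nonneg _) (by positivity)
      _ = (∑ j ∈ Finset.Icc 1 N, (2:ℝ) ^ j) * (β * (N : ℝ) ^ (1 / p)) := by
          rw [← Finset.sum_mul]
  have hFint : Integrable (Function.uncurry F) (μ₀.prod μ) := by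
    refine Integrable.mono' (integrable_const C) hFmeas.aestronglyMeasurable ?_
    refine Filter.Eventually.of_forall fun q => ?_
    obtain ⟨s, t⟩ := q
    simp only [Function.uncurry_apply_pair]
    rw [Real.norm_of_nonneg (hFnn s t)]
    exact hFbd s t
  -- lower bound on the double integral
  have hlow : (A * (N : ℝ) ^ ((1 : ℝ) / 2)) ^ p ≤ ∫ s, (∫ t, F s t ∂μ) ∂μ₀ := by
    have hs_bound : ∀ᵐ s ∂μ₀, (A * (N : ℝ) ^ ((1 : ℝ) / 2)) ^ p ≤ ∫ t, F s t ∂μ := by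
      filter_upwards [ae_restrict_mem measurableSet_Ico] with s hs
      have h1 := (hiso (fun j => Rad j s)).1
      have hsum : ∑ j ∈ Finset.Icc 1 N, |Rad j s| ^ 2 = (N : ℝ) := by
        rw [Finset.sum_congr rfl fun j _ => by rw [Rad_abs_eq j hs, one_pow]]
        simp
      rw [hsum] at h1
      have hint0 : 0 ≤ ∫ t, F s t ∂μ := integral_nonneg fun t => hFnn s t
      have := Real.rpow_le_rpow (by positivity) h1 hp0.le
      rwa [← Real.rpow_mul hint0, one_div_mul_cancel hp0', Real.rpow_one] at this
    calc (A * (N : ℝ) ^ ((1 : ℝ) / 2)) ^ p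
        = ∫ _, (A * (N : ℝ) ^ ((1 : ℝ) / 2)) ^ p ∂μ₀ := by
          rw [integral_const]; simp [hμ₀prob.measure_univ]
      _ ≤ ∫ s, (∫ t, F s t ∂μ) ∂μ₀ :=
          integral_mono_ae (integrable_const _) hFint.integral_prod_left hs_bound
  -- upper bound
  have hup : ∫ t, (∫ s, F s t ∂μ₀) ∂μ ≤ (Bp * (β * (N : ℝ) ^ (1 / p) * B)) ^ p := by
    have ht_bound : ∀ t, ∫ s, F s t ∂μ₀ ≤ (Bp * (β * (N : ℝ) ^ (1 / p) * B)) ^ p := by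
      intro t
      have h1 := hKh (fun j => x j t)
      have hswap : (∫ s in Set.Ico (0 : ℝ) 1,
          |∑ j ∈ Finset.Icc 1 N, x j t * Rad j s| ^ p) = ∫ s, F s t ∂μ₀ := by
        rw [hμ₀]; congr 1; funext s; rw [hF]
        congr 2
        exact Finset.sum_congr rfl fun j _ => mul_comm _ _
      rw [hswap] at h1
      have hint0 : 0 ≤ ∫ s, F s t ∂μ₀ := integral_nonneg fun s => hFnn s t
      have h2 : (∫ s, F s t ∂μ₀) ^ (1 / p) ≤ Bp * (β * (N : ℝ) ^ (1 / p) * B) :=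
        h1.trans (mul_le_mul_of_nonneg_left (key t) hBp.le)
      have := Real.rpow_le_rpow (Real.rpow_nonneg hint0 _) h2 hp0.le
      rwa [← Real.rpow_mul hint0, one_div_mul_cancel hp0', Real.rpow_one] at this
    calc ∫ t, (∫ s, F s t ∂μ₀) ∂μ
        ≤ ∫ _, (Bp * (β * (N : ℝ) ^ (1 / p) * B)) ^ p ∂μ :=
          integral_mono hFint.integral_prod_right (integrable_const _)
            fun t => ht_bound t
      _ = (Bp * (β * (N : ℝ) ^ (1 / p) * B)) ^ p := by
          rw [integral_const]; simp
  -- combine via Fubini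
  have hswap := integral_integral_swap (f := F) hFint
  have hmain : (A * (N : ℝ) ^ ((1 : ℝ) / 2)) ^ p ≤
      (Bp * (β * (N : ℝ) ^ (1 / p) * B)) ^ p := by
    calc (A * (N : ℝ) ^ ((1 : ℝ) / 2)) ^ p ≤ ∫ s, (∫ t, F s t ∂μ) ∂μ₀ := hlow
      _ = ∫ t, (∫ s, F s t ∂μ₀) ∂μ := hswap
      _ ≤ _ := hup
  have hfin : A * (N : ℝ) ^ ((1 : ℝ) / 2) ≤ Bp * (β * (N : ℝ) ^ (1 / p) * B) := by
    have := Real.rpow_le_rpow (by positivity) hmain (by positivity : (0:ℝ) ≤ 1/p)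
    rwa [← Real.rpow_mul (by positivity), ← Real.rpow_mul (by positivity),
      mul_one_div, div_self hp0', Real.rpow_one, Real.rpow_one] at this
  -- final algebra
  have hNp : (0 : ℝ) < (N : ℝ) ^ ((1:ℝ) / p) := Real.rpow_pos_of_pos hNpos _
  have heq : A / (B * Bp) * (N : ℝ) ^ ((1 : ℝ) / 2 - 1 / p) =
      (A * (N : ℝ) ^ ((1 : ℝ) / 2)) / (B * Bp * (N : ℝ) ^ ((1:ℝ) / p)) := by
    rw [Real.rpow_sub hNpos]; ring
  rw [heq, div_le_iff₀ (by positivity)]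
  calc A * (N : ℝ) ^ ((1 : ℝ) / 2) ≤ Bp * (β * (N : ℝ) ^ (1 / p) * B) := hfin
    _ = β * (B * Bp * (N : ℝ) ^ ((1:ℝ) / p)) := by ring
end

section
/- Let (Ω,μ) be a probability space, N ∈ ℕ, and let X^N be an N-dimensional linear subspace of real-valued measurable functions on Ω, each belonging to L_2(μ). Suppose κ, β > 0 are such that: (i) |x(t)| ≤ β·√N·‖x‖_{L_2(μ)} for all t ∈ Ω and all x ∈ X^N, and (ii) min(‖f−g‖_{L_2(μ)}, ‖f+g‖_{L_2(μ)}) ≤ κ·‖ |f| − |g| ‖_{L_2(μ)} for all f, g ∈ X^N. Then every x ∈ X^N satisfies ‖x‖_{L_1(μ)} ≤ ‖x‖_{L_2(μ)} ≤ κ^3·(1+β^2)^{3/2}·‖x‖_{L_1(μ)}. -/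
/-!
Condition (i) makes `∫ f²` definite on `X`, so `X` is a Euclidean space for the `L²(μ)` inner
product; for an orthonormal basis `bᵢ` of it, (i) applied to `∑ᵢ bᵢ(t) bᵢ` gives the Christoffel
bound `∑ᵢ bᵢ(t)² ≤ β² N`. Condition (ii) applied to `f ± ‖f‖₂ bᵢ`, together with
`(|a + b| - |a - b|)² = 4 min(a², b²)`, gives `‖f‖₂² ≤ κ² ∫ min(f², ‖f‖₂² bᵢ²)`. Summing over `i`
and bounding `∑ᵢ min(f², ‖f‖₂² bᵢ²) ≤ N min(f², β² ‖f‖₂²) ≤ N |β| ‖f‖₂ |f|` pointwise yields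
`‖f‖₂ ≤ κ² |β| ‖f‖₁`; this is at most the claimed bound because (ii) applied to `(f, 0)` forces
`κ ≥ 1`.
-/

open MeasureTheory Finset Real

theorem sq_abs_add_sub_abs_sub (a b : ℝ) : (|a + b| - |a - b|) ^ 2 = 4 * min (a ^ 2) (b ^ 2) := by
  have hmul : |a + b| * |a - b| = |a ^ 2 - b ^ 2| := by rw [← abs_mul]; ring_nf
  rcases le_total (a ^ 2) (b ^ 2) with h | h
  · rw [min_eq_left h]
    rw [abs_of_nonpos (sub_nonpos.2 h)] at hmul
    nlinarith [sq_abs (a + b), sq_abs (a - b)]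
  · rw [min_eq_right h]
    rw [abs_of_nonneg (sub_nonneg.2 h)] at hmul
    nlinarith [sq_abs (a + b), sq_abs (a - b)]

theorem min_sq_le_abs_mul_abs (a b : ℝ) : min (a ^ 2) (b ^ 2) ≤ |a| * |b| := by
  rcases le_total |a| |b| with h | h
  · calc min (a ^ 2) (b ^ 2) ≤ |a| * |a| := by rw [← sq, sq_abs]; exact min_le_left _ _
      _ ≤ |a| * |b| := by gcongr
  · calc min (a ^ 2) (b ^ 2) ≤ |b| * |b| := by rw [← sq, sq_abs]; exact min_le_right _ _
      _ ≤ |a| * |b| := by gcongr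

theorem sum_min_sq_le {ι : Type*} [Fintype ι] (a m β : ℝ) (c : ι → ℝ) (hm : 0 ≤ m)
    (hc : ∑ i, c i ^ 2 ≤ β ^ 2 * Fintype.card ι) :
    ∑ i, min (a ^ 2) (m * c i ^ 2) ≤ Fintype.card ι * (|β| * √m * |a|) := by
  have hn : (0 : ℝ) ≤ Fintype.card ι := Nat.cast_nonneg _
  calc ∑ i, min (a ^ 2) (m * c i ^ 2) ≤ min (∑ _i : ι, a ^ 2) (∑ i, m * c i ^ 2) :=
        le_min (sum_le_sum fun i _ => min_le_left _ _) (sum_le_sum fun i _ => min_le_right _ _)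
    _ = min (Fintype.card ι * a ^ 2) (m * ∑ i, c i ^ 2) := by
        rw [sum_const, nsmul_eq_mul, mul_sum, card_univ]
    _ ≤ min (Fintype.card ι * a ^ 2) (Fintype.card ι * (β * √m) ^ 2) := by
        refine min_le_min_left _ ?_
        rw [mul_pow, sq_sqrt hm]
        nlinarith [mul_le_mul_of_nonneg_left hc hm]
    _ = Fintype.card ι * min (a ^ 2) ((β * √m) ^ 2) := (mul_min_of_nonneg _ _ hn).symm
    _ ≤ Fintype.card ι * (|a| * |β * √m|) := by gcongr; exact min_sq_le_abs_mul_abs _ _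
    _ = Fintype.card ι * (|β| * √m * |a|) := by
        rw [abs_mul, abs_of_nonneg (sqrt_nonneg m)]; ring

theorem abs_le_one_add_sq_rpow (β : ℝ) {p : ℝ} (hp : 1 ≤ p) : |β| ≤ (1 + β ^ 2) ^ p :=
  calc |β| ≤ 1 + β ^ 2 := by nlinarith [sq_abs β, sq_nonneg (|β| - 1)]
    _ ≤ (1 + β ^ 2) ^ p := self_le_rpow_of_one_le (by nlinarith [sq_nonneg β]) hp

theorem integral_abs_le_sqrt_integral_sq {Ω : Type*} [MeasurableSpace Ω] {μ : Measure Ω}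
    [IsProbabilityMeasure μ] {f : Ω → ℝ} (hf : MemLp f 2 μ) :
    ∫ s, |f s| ∂μ ≤ √(∫ s, f s ^ 2 ∂μ) := by
  have h := ProbabilityTheory.variance_eq_sub hf.abs ▸
    ProbabilityTheory.variance_nonneg (fun s => |f s|) μ
  refine le_sqrt_of_sq_le ?_
  simpa [sq_abs] using h

theorem Orthonormal.sum_sq_le_of_abs_le {E ι : Type*} [NormedAddCommGroup E]
    [InnerProductSpace ℝ E] [Fintype ι] {b : ι → E} (hb : Orthonormal ℝ b) (φ : E →ₗ[ℝ] ℝ)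
    {C : ℝ} (hφ : ∀ x, |φ x| ≤ C * ‖x‖) : ∑ i, φ (b i) ^ 2 ≤ C ^ 2 := by
  set x := ∑ i, φ (b i) • b i
  have hφx : φ x = ∑ i, φ (b i) ^ 2 := by simp [x, sq]
  have hx : ‖x‖ ^ 2 = ∑ i, φ (b i) ^ 2 := by
    rw [← real_inner_self_eq_norm_sq, hb.inner_sum]; simp [sq]
  have h := hφ x
  rw [hφx, abs_of_nonneg (by positivity), ← hx] at h
  nlinarith [norm_nonneg x]

section

variable {Ω : Type*} [MeasurableSpace Ω]

namespace Submodule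

@[reducible] noncomputable def l2InnerCore (μ : Measure Ω) (X : Submodule ℝ (Ω → ℝ))
    (hmem : ∀ f ∈ X, MemLp f 2 μ) (hdef : ∀ f ∈ X, ∫ s, f s ^ 2 ∂μ = 0 → f = 0) :
    InnerProductSpace.Core ℝ X where
  inner f g := ∫ s, (f : Ω → ℝ) s * (g : Ω → ℝ) s ∂μ
  conj_inner_symm f g := by simp only [conj_trivial, mul_comm]
  re_inner_nonneg f := integral_nonneg fun s => mul_self_nonneg _
  add_left f g h := by
    simp only [coe_add, Pi.add_apply, add_mul]
    exact integral_add ((hmem f f.2).integrable_mul (hmem h h.2))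
      ((hmem g g.2).integrable_mul (hmem h h.2))
  smul_left f g r := by
    simp only [coe_smul, Pi.smul_apply, smul_eq_mul, mul_assoc, conj_trivial]
    exact integral_const_mul r _
  definite f hf := Subtype.ext <| hdef f f.2 <| by simpa only [sq] using hf

theorem exists_l2_normalized_family_sum_sq_le {μ : Measure Ω} {X : Submodule ℝ (Ω → ℝ)}
    (hmem : ∀ f ∈ X, MemLp f 2 μ) {C : ℝ}
    (hbound : ∀ f ∈ X, ∀ t, |f t| ≤ C * √(∫ s, f s ^ 2 ∂μ)) :
    ∃ b : Fin (Module.finrank ℝ X) → Ω → ℝ, (∀ i, b i ∈ X) ∧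
      (∀ i, ∫ s, b i s ^ 2 ∂μ = 1) ∧ ∀ t, ∑ i, b i t ^ 2 ≤ C ^ 2 := by
  have hdef : ∀ f ∈ X, ∫ s, f s ^ 2 ∂μ = 0 → f = 0 := fun f hf h0 =>
    funext fun t => abs_nonpos_iff.mp (by simpa [h0] using hbound f hf t)
  let core := X.l2InnerCore μ hmem hdef
  let _ := core.toNormedAddCommGroup
  let _ := InnerProductSpace.ofCore core.toCore
  rcases (Module.finrank ℝ X).eq_zero_or_pos with h | h
  · have : IsEmpty (Fin (Module.finrank ℝ X)) := by rw [h]; infer_instance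
    exact ⟨isEmptyElim, isEmptyElim, isEmptyElim, fun _ => by simpa using sq_nonneg C⟩
  have : FiniteDimensional ℝ X := Module.finite_of_finrank_pos h
  let B := stdOrthonormalBasis ℝ X
  have hnorm (x : X) : ‖x‖ = √(∫ s, (x : Ω → ℝ) s ^ 2 ∂μ) := by
    simp only [norm_eq_sqrt_re_inner (𝕜 := ℝ), sq]
    rfl
  refine ⟨fun i => B i, fun i => (B i).2, fun i => ?_, fun t => ?_⟩
  · have := B.orthonormal.1 i
    rw [hnorm] at this
    simpa using this
  · exact B.orthonormal.sum_sq_le_of_abs_le ((LinearMap.proj t).comp X.subtype)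
      fun x => by simpa [hnorm] using hbound x x.2 t

end Submodule

def StablePhaseRetrieval (μ : Measure Ω) (X : Submodule ℝ (Ω → ℝ)) (κ : ℝ) : Prop :=
  ∀ f ∈ X, ∀ g ∈ X, min √(∫ s, (f s - g s) ^ 2 ∂μ) √(∫ s, (f s + g s) ^ 2 ∂μ) ≤
    κ * √(∫ s, (|f s| - |g s|) ^ 2 ∂μ)

namespace StablePhaseRetrieval

variable {μ : Measure Ω} {X : Submodule ℝ (Ω → ℝ)} {κ : ℝ} {f : Ω → ℝ}

theorem one_le (h : StablePhaseRetrieval μ X κ) (hf : f ∈ X) (hpos : 0 < ∫ s, f s ^ 2 ∂μ) :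
    1 ≤ κ := by
  have h0 := h f hf 0 X.zero_mem
  simp only [Pi.zero_apply, sub_zero, add_zero, abs_zero, sq_abs, min_self] at h0
  exact le_of_mul_le_mul_right (by rwa [one_mul]) (sqrt_pos.2 hpos)

theorem integral_sq_le (h : StablePhaseRetrieval μ X κ) {b : Ω → ℝ} (hf : f ∈ X) (hb : b ∈ X)
    (hb1 : ∫ s, b s ^ 2 ∂μ = 1) :
    ∫ s, f s ^ 2 ∂μ ≤ κ ^ 2 * ∫ s, min (f s ^ 2) ((∫ s, f s ^ 2 ∂μ) * b s ^ 2) ∂μ := by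
  set m := ∫ s, f s ^ 2 ∂μ
  have hm : 0 ≤ m := integral_nonneg fun s => sq_nonneg _
  have hrb := X.smul_mem √m hb
  have h2 := h _ (X.add_mem hf hrb) _ (X.sub_mem hf hrb)
  have hdiff : ∫ s, ((f + √m • b) s - (f - √m • b) s) ^ 2 ∂μ = 4 * m := by
    have hpt (s : Ω) : ((f + √m • b) s - (f - √m • b) s) ^ 2 = 4 * m * b s ^ 2 := by
      simp only [Pi.add_apply, Pi.sub_apply, Pi.smul_apply, smul_eq_mul]
      linear_combination (4 * b s ^ 2) * sq_sqrt hm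
    simp only [hpt, integral_const_mul, hb1, mul_one]
  have hsum : ∫ s, ((f + √m • b) s + (f - √m • b) s) ^ 2 ∂μ = 4 * m := by
    have hpt (s : Ω) : ((f + √m • b) s + (f - √m • b) s) ^ 2 = 4 * f s ^ 2 := by
      simp only [Pi.add_apply, Pi.sub_apply, Pi.smul_apply, smul_eq_mul]
      ring
    simp only [hpt, integral_const_mul, m]
  have habs : ∫ s, (|(f + √m • b) s| - |(f - √m • b) s|) ^ 2 ∂μ =
      4 * ∫ s, min (f s ^ 2) (m * b s ^ 2) ∂μ := by
    simp only [Pi.add_apply, Pi.sub_apply, Pi.smul_apply, smul_eq_mul, sq_abs_add_sub_abs_sub,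
      mul_pow, sq_sqrt hm]
    rw [integral_const_mul]
  rw [hdiff, hsum, habs, min_self] at h2
  have h3 := pow_le_pow_left₀ (sqrt_nonneg _) h2 2
  rw [mul_pow, sq_sqrt (by positivity), sq_sqrt (by positivity)] at h3
  linarith

theorem sqrt_integral_sq_le (h : StablePhaseRetrieval μ X κ) [IsFiniteMeasure μ]
    (hmem : ∀ f ∈ X, MemLp f 2 μ) {ι : Type*} [Fintype ι] [Nonempty ι] {b : ι → Ω → ℝ}
    (hbX : ∀ i, b i ∈ X) (hb1 : ∀ i, ∫ s, b i s ^ 2 ∂μ = 1) {β : ℝ}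
    (hbsum : ∀ t, ∑ i, b i t ^ 2 ≤ β ^ 2 * Fintype.card ι) (hf : f ∈ X) :
    √(∫ s, f s ^ 2 ∂μ) ≤ κ ^ 2 * |β| * ∫ s, |f s| ∂μ := by
  set m := ∫ s, f s ^ 2 ∂μ
  set n : ℝ := (Fintype.card ι : ℝ)
  have hm : 0 ≤ m := integral_nonneg fun s => sq_nonneg _
  have hn : 0 < n := Nat.cast_pos.2 Fintype.card_pos
  have hf2 := (hmem f hf).integrable_sq
  have hmin (i : ι) : Integrable (fun s => min (f s ^ 2) (m * b i s ^ 2)) μ := by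
    refine hf2.mono' ?_ (ae_of_all _ fun s => ?_)
    · have := (hmem f hf).aestronglyMeasurable
      have := (hmem _ (hbX i)).aestronglyMeasurable
      fun_prop
    · rw [norm_of_nonneg (le_min (sq_nonneg _) (by positivity))]
      exact min_le_left _ _
  have key : n * m ≤ n * (κ ^ 2 * (|β| * √m * ∫ s, |f s| ∂μ)) := calc
    n * m = ∑ _i : ι, m := by simp [n]
    _ ≤ ∑ i, κ ^ 2 * ∫ s, min (f s ^ 2) (m * b i s ^ 2) ∂μ :=
        sum_le_sum fun i _ => h.integral_sq_le hf (hbX i) (hb1 i)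
    _ = κ ^ 2 * ∫ s, ∑ i, min (f s ^ 2) (m * b i s ^ 2) ∂μ := by
        rw [← mul_sum, integral_finsetSum _ fun i _ => hmin i]
    _ ≤ κ ^ 2 * ∫ s, n * (|β| * √m * |f s|) ∂μ := by
        refine mul_le_mul_of_nonneg_left ?_ (sq_nonneg κ)
        exact integral_mono (integrable_finsetSum _ fun i _ => hmin i)
          ((((hmem f hf).integrable one_le_two).abs.const_mul _).const_mul _)
          fun s => sum_min_sq_le _ _ _ _ hm (hbsum s)
    _ = n * (κ ^ 2 * (|β| * √m * ∫ s, |f s| ∂μ)) := by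
        rw [integral_const_mul, integral_const_mul]; ring
  have hc : 0 ≤ κ ^ 2 * |β| * ∫ s, |f s| ∂μ := by positivity
  have hsq : √m ^ 2 ≤ (κ ^ 2 * |β| * ∫ s, |f s| ∂μ) * √m := by
    rw [sq_sqrt hm]; linarith [le_of_mul_le_mul_left key hn]
  nlinarith [sqrt_nonneg m]

end StablePhaseRetrieval

end

theorem stmt13_general {Ω : Type*} [MeasurableSpace Ω] (μ : Measure Ω) [IsProbabilityMeasure μ]
    (N : ℕ) (X : Submodule ℝ (Ω → ℝ)) (hdim : Module.finrank ℝ X = N)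
    (hmem : ∀ f ∈ X, Measurable f ∧ MemLp f 2 μ)
    (κ β : ℝ)
    (hNik : ∀ f ∈ X, ∀ t : Ω,
      |f t| ≤ β * Real.sqrt N * (∫ s, |f s| ^ 2 ∂μ) ^ ((1 : ℝ) / 2))
    (hstab : ∀ f ∈ X, ∀ g ∈ X,
      min ((∫ s, |f s - g s| ^ 2 ∂μ) ^ ((1 : ℝ) / 2))
          ((∫ s, |f s + g s| ^ 2 ∂μ) ^ ((1 : ℝ) / 2)) ≤
        κ * (∫ s, (|f s| - |g s|) ^ 2 ∂μ) ^ ((1 : ℝ) / 2)) :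
    ∀ f ∈ X,
      (∫ s, |f s| ∂μ) ≤ (∫ s, |f s| ^ 2 ∂μ) ^ ((1 : ℝ) / 2) ∧
        (∫ s, |f s| ^ 2 ∂μ) ^ ((1 : ℝ) / 2) ≤
          κ ^ 3 * (1 + β ^ 2) ^ ((3 : ℝ) / 2) * ∫ s, |f s| ∂μ := by
  simp only [sq_abs, ← sqrt_eq_rpow] at hNik hstab ⊢
  have hL2 : ∀ f ∈ X, MemLp f 2 μ := fun f hf => (hmem f hf).2
  intro f hf
  have hL1 := integral_abs_le_sqrt_integral_sq (hL2 f hf)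
  refine ⟨hL1, ?_⟩
  rcases (integral_nonneg fun s => sq_nonneg (f s) : 0 ≤ ∫ s, f s ^ 2 ∂μ).eq_or_lt with h0 | hpos
  · have hf1 : ∫ s, |f s| ∂μ = 0 :=
      le_antisymm (by simpa [← h0] using hL1) (integral_nonneg fun s => abs_nonneg _)
    simp [← h0, hf1]
  have hN : N ≠ 0 := by
    rintro rfl
    have hf0 : f = 0 := funext fun t => abs_nonpos_iff.mp (by simpa using hNik f hf t)
    simp [hf0] at hpos
  obtain ⟨b, hbX, hb1, hbsum⟩ := X.exists_l2_normalized_family_sum_sq_le hL2 hNik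
  have : Nonempty (Fin (Module.finrank ℝ X)) := ⟨⟨0, by omega⟩⟩
  have hκ1 : 1 ≤ κ := StablePhaseRetrieval.one_le hstab hf hpos
  calc √(∫ s, f s ^ 2 ∂μ) ≤ κ ^ 2 * |β| * ∫ s, |f s| ∂μ :=
        StablePhaseRetrieval.sqrt_integral_sq_le hstab hL2 hbX hb1
          (fun t => by simpa [mul_pow, hdim] using hbsum t) hf
    _ ≤ κ ^ 3 * (1 + β ^ 2) ^ ((3 : ℝ) / 2) * ∫ s, |f s| ∂μ := by
        gcongr ?_ * ?_ * _
        · exact pow_le_pow_right₀ hκ1 (by norm_num : 2 ≤ 3)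
        · exact abs_le_one_add_sq_rpow β (by norm_num)

theorem stmt13 {Ω : Type*} [MeasurableSpace Ω] (μ : Measure Ω) [IsProbabilityMeasure μ]
    (N : ℕ) (X : Submodule ℝ (Ω → ℝ)) (hdim : Module.finrank ℝ X = N)
    (hmem : ∀ f ∈ X, Measurable f ∧ MemLp f 2 μ)
    (κ β : ℝ) (hκ : 0 < κ) (hβ : 0 < β)
    (hNik : ∀ f ∈ X, ∀ t : Ω,
      |f t| ≤ β * Real.sqrt N * (∫ s, |f s| ^ 2 ∂μ) ^ ((1 : ℝ) / 2))
    (hstab : ∀ f ∈ X, ∀ g ∈ X,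
      min ((∫ s, |f s - g s| ^ 2 ∂μ) ^ ((1 : ℝ) / 2))
          ((∫ s, |f s + g s| ^ 2 ∂μ) ^ ((1 : ℝ) / 2)) ≤
        κ * (∫ s, (|f s| - |g s|) ^ 2 ∂μ) ^ ((1 : ℝ) / 2)) :
    ∀ f ∈ X,
      (∫ s, |f s| ∂μ) ≤ (∫ s, |f s| ^ 2 ∂μ) ^ ((1 : ℝ) / 2) ∧
        (∫ s, |f s| ^ 2 ∂μ) ^ ((1 : ℝ) / 2) ≤
          κ ^ 3 * (1 + β ^ 2) ^ ((3 : ℝ) / 2) * ∫ s, |f s| ∂μ :=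
  stmt13_general μ N X hdim hmem κ β hNik hstab
end

section
/- Let (Ω,μ) be a probability space, N ∈ ℕ with N ≥ 1, and let X^N be an N-dimensional linear subspace of real-valued measurable functions on Ω, each belonging to L_2(μ), such that |x(t)| ≤ β·√N·‖x‖_{L_2(μ)} for all t ∈ Ω and all x ∈ X^N, where β > 0. Then for every measurable set S ⊆ Ω there exists y ∈ X^N with ‖y‖_{L_2(μ)} = 1 and ∫_S |y(t)|^2 dμ(t) ≤ μ(S)·β^2. -/
/-!
Give `X` the inner product of `L²(μ)`; the Nikolskii inequality makes it definite. For an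
orthonormal basis `b₁, …, b_N` and a point `t`, the function `g = ∑ bᵢ(t) bᵢ` satisfies
`g(t) = ‖g‖² = ∑ bᵢ(t)²`, so the Nikolskii inequality at `t` gives `∑ bᵢ(t)² ≤ β² N`.
Integrating over `S` yields `∑ ∫_S bᵢ² ≤ N μ(S) β²`, and the smallest of the `N` terms
gives the required `y`.
-/

open MeasureTheory Module

theorem OrthonormalBasis.sum_sq_apply_le {ι E : Type*} [Fintype ι] [NormedAddCommGroup E]
    [InnerProductSpace ℝ E] (b : OrthonormalBasis ι ℝ E) (φ : E →ₗ[ℝ] ℝ) {C : ℝ}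
    (hφ : ∀ x, |φ x| ≤ C * ‖x‖) : ∑ i, φ (b i) ^ 2 ≤ C ^ 2 := by
  set g := ∑ i, φ (b i) • b i
  -- `g` is the Riesz representative of `φ`
  have hφg : φ g = ‖g‖ ^ 2 := by
    rw [← b.sum_sq_norm_inner_right g]
    simp [g, map_sum, b.orthonormal.inner_right_fintype, sq]
  have hsum : ∑ i, φ (b i) ^ 2 = ‖g‖ ^ 2 := by
    rw [← hφg]; simp [g, map_sum, sq]
  have : ‖g‖ ^ 2 ≤ C * ‖g‖ := hφg ▸ (le_abs_self _).trans (hφ g)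
  nlinarith [sq_nonneg (C - ‖g‖), norm_nonneg g]

namespace Submodule

variable {Ω : Type*} [MeasurableSpace Ω] {μ : Measure Ω} {X : Submodule ℝ (Ω → ℝ)}

def toLp (p : ENNReal) (hX : ∀ f ∈ X, MemLp f p μ) : X →ₗ[ℝ] Lp ℝ p μ where
  toFun f := (hX f f.2).toLp f
  map_add' f g := MemLp.toLp_add (hX f f.2) (hX g g.2)
  map_smul' c f := MemLp.toLp_const_smul c (hX f f.2)

theorem norm_toLp_two (hX : ∀ f ∈ X, MemLp f 2 μ) (f : X) :
    ‖X.toLp 2 hX f‖ = (∫ s, |(f : Ω → ℝ) s| ^ 2 ∂μ) ^ ((1 : ℝ) / 2) := by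
  rw [toLp, LinearMap.coe_mk, AddHom.coe_mk, Lp.norm_toLp,
    (hX f f.2).eLpNorm_eq_integral_rpow_norm two_ne_zero ENNReal.ofNat_ne_top,
    ENNReal.toReal_ofReal (by positivity)]
  simp [Real.norm_eq_abs]

theorem toLp_two_injective {C : ℝ} (hX : ∀ f ∈ X, MemLp f 2 μ)
    (hC : ∀ f ∈ X, ∀ t, |f t| ≤ C * (∫ s, |f s| ^ 2 ∂μ) ^ ((1 : ℝ) / 2)) :
    Function.Injective (X.toLp 2 hX) := by
  refine (injective_iff_map_eq_zero _).2 fun f hf ↦ ?_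
  ext t
  have := hC f f.2 t
  rw [← norm_toLp_two hX, hf, norm_zero, mul_zero, abs_nonpos_iff] at this
  exact this

theorem exists_norm_eq_one_setIntegral_sq_le [IsFiniteMeasure μ] {C : ℝ}
    (hpos : 0 < finrank ℝ X) (hX : ∀ f ∈ X, MemLp f 2 μ)
    (hC : ∀ f ∈ X, ∀ t, |f t| ≤ C * (∫ s, |f s| ^ 2 ∂μ) ^ ((1 : ℝ) / 2)) (S : Set Ω) :
    ∃ y ∈ X, (∫ s, |y s| ^ 2 ∂μ) ^ ((1 : ℝ) / 2) = 1 ∧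
      finrank ℝ X * ∫ s in S, |y s| ^ 2 ∂μ ≤ μ.real S * C ^ 2 := by
  let : NormedAddCommGroup X :=
    NormedAddCommGroup.induced X (Lp ℝ 2 μ) (X.toLp 2 hX) (toLp_two_injective hX hC)
  let : InnerProductSpace ℝ X := InnerProductSpace.induced (X.toLp 2 hX)
  have : FiniteDimensional ℝ X := Module.finite_of_finrank_pos hpos
  let b := stdOrthonormalBasis ℝ X
  have hpoint (t : Ω) : ∑ i, (b i : Ω → ℝ) t ^ 2 ≤ C ^ 2 := by
    have hev : ∀ f : X, |(LinearMap.proj t ∘ₗ X.subtype) f| ≤ C * ‖X.toLp 2 hX f‖ := fun f ↦ by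
      rw [norm_toLp_two hX]
      exact hC f f.2 t
    exact b.sum_sq_apply_le _ hev
  have hint (i) : Integrable (fun s ↦ |(b i : Ω → ℝ) s| ^ 2) μ := by
    simpa using (hX _ (b i).2).integrable_sq
  have hsum : ∑ i, ∫ s in S, |(b i : Ω → ℝ) s| ^ 2 ∂μ ≤ μ.real S * C ^ 2 := by
    rw [← integral_finsetSum _ fun i _ ↦ (hint i).integrableOn, ← smul_eq_mul,
      ← setIntegral_const]
    refine integral_mono (integrable_finsetSum _ fun i _ ↦ (hint i).integrableOn)
      (integrable_const _) fun t ↦ ?_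
    simp only [sq_abs]
    exact hpoint t
  have hscaled : ∑ i, finrank ℝ X * ∫ s in S, |(b i : Ω → ℝ) s| ^ 2 ∂μ ≤
      ∑ _i : Fin (finrank ℝ X), μ.real S * C ^ 2 := by
    rw [← Finset.mul_sum, Finset.sum_const, Finset.card_univ, Fintype.card_fin, nsmul_eq_mul]
    gcongr
  obtain ⟨i, -, hi⟩ := Finset.exists_le_of_sum_le (Finset.univ_nonempty_iff.2 ⟨⟨0, hpos⟩⟩) hscaled
  refine ⟨b i, (b i).2, ?_, hi⟩
  rw [← norm_toLp_two hX]
  exact b.orthonormal.1 i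

end Submodule

theorem stmt14_general {Ω : Type*} [MeasurableSpace Ω] (μ : Measure Ω) [IsProbabilityMeasure μ]
    (N : ℕ) (hN : 1 ≤ N) (X : Submodule ℝ (Ω → ℝ)) (hdim : Module.finrank ℝ X = N)
    (hmem : ∀ f ∈ X, Measurable f ∧ MemLp f 2 μ)
    (β : ℝ)
    (hNik : ∀ f ∈ X, ∀ t : Ω,
      |f t| ≤ β * Real.sqrt N * (∫ s, |f s| ^ 2 ∂μ) ^ ((1 : ℝ) / 2)) :
    ∀ S : Set Ω, MeasurableSet S →
      ∃ y ∈ X, (∫ s, |y s| ^ 2 ∂μ) ^ ((1 : ℝ) / 2) = 1 ∧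
        ∫ s in S, |y s| ^ 2 ∂μ ≤ (μ S).toReal * β ^ 2 := by
  intro S _
  obtain ⟨y, hyX, hy1, hyS⟩ := X.exists_norm_eq_one_setIntegral_sq_le (by omega)
    (fun f hf ↦ (hmem f hf).2) hNik S
  refine ⟨y, hyX, hy1, le_of_mul_le_mul_left ?_ (by positivity : (0 : ℝ) < N)⟩
  rw [hdim, mul_pow, Real.sq_sqrt N.cast_nonneg] at hyS
  rw [← measureReal_def]
  linarith

theorem stmt14 {Ω : Type*} [MeasurableSpace Ω] (μ : Measure Ω) [IsProbabilityMeasure μ]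
    (N : ℕ) (hN : 1 ≤ N) (X : Submodule ℝ (Ω → ℝ)) (hdim : Module.finrank ℝ X = N)
    (hmem : ∀ f ∈ X, Measurable f ∧ MemLp f 2 μ)
    (β : ℝ) (hβ : 0 < β)
    (hNik : ∀ f ∈ X, ∀ t : Ω,
      |f t| ≤ β * Real.sqrt N * (∫ s, |f s| ^ 2 ∂μ) ^ ((1 : ℝ) / 2)) :
    ∀ S : Set Ω, MeasurableSet S →
      ∃ y ∈ X, (∫ s, |y s| ^ 2 ∂μ) ^ ((1 : ℝ) / 2) = 1 ∧
        ∫ s in S, |y s| ^ 2 ∂μ ≤ (μ S).toReal * β ^ 2 :=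
  stmt14_general μ N hN X hdim hmem β hNik
end
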